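/- arXiv:2601.20801 — 4 statements merged into one kernel-verified Lean document; each statement's English description precedes it below -/
import Mathlib

section
/- Let κ₁, κ₂ > 0 and C ≥ 0. Let f be a nonnegative continuous function on (0,1] with ∫₀¹ f(t) dt < ∞. Let G : [0,1] → [0,∞) be continuous on [0,1], differentiable on (0,1], with G(0) = 0, and suppose that for all t ∈ (0,1] one has G'(t) ≤ C t^{κ₁−1} G(t) + f(t) √(G(t)) + C t^{κ₂−1}. Then there exists a constant C' > 0, depending only on C, κ₁ and κ₂, such that for all t ∈ [0,1], G(t) ≤ C' ( (∫₀ᵗ f(u) du)² + t^{κ₂} ). -/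
open MeasureTheory Set intervalIntegral

private lemma aux_deriv (κ₁ κ₂ C : ℝ) (G G' : ℝ → ℝ)
    (x : ℝ) (hx0 : 0 < x) (hx1 : x < 1)
    (hGx : 0 < G x + x ^ κ₂)
    (hGd : HasDerivWithinAt G (G' x) (Icc (0:ℝ) 1) x) :
    HasDerivWithinAt (fun u => Real.sqrt (G u + u ^ κ₂) * Real.exp (-(C / (2 * κ₁)) * u ^ κ₁))
      (1 / (2 * Real.sqrt (G x + x ^ κ₂)) * (G' x + κ₂ * x ^ (κ₂ - 1))
          * Real.exp (-(C / (2 * κ₁)) * x ^ κ₁)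
        + Real.sqrt (G x + x ^ κ₂)
          * (Real.exp (-(C / (2 * κ₁)) * x ^ κ₁) * (-(C / (2 * κ₁)) * (κ₁ * x ^ (κ₁ - 1)))))
      (Ioi x) x := by
  have h1 : HasDerivWithinAt (fun u : ℝ => G u + u ^ κ₂)
      (G' x + κ₂ * x ^ (κ₂ - 1)) (Icc (0:ℝ) 1) x :=
    hGd.add ((Real.hasDerivAt_rpow_const (Or.inl hx0.ne')).hasDerivWithinAt)
  have h2 : HasDerivWithinAt (fun u : ℝ => Real.sqrt (G u + u ^ κ₂))
      (1 / (2 * Real.sqrt (G x + x ^ κ₂)) * (G' x + κ₂ * x ^ (κ₂ - 1))) (Icc (0:ℝ) 1) x :=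
    (Real.hasDerivAt_sqrt hGx.ne').comp_hasDerivWithinAt x h1
  have h3 : HasDerivAt (fun u : ℝ => Real.exp (-(C / (2 * κ₁)) * u ^ κ₁))
      (Real.exp (-(C / (2 * κ₁)) * x ^ κ₁) * (-(C / (2 * κ₁)) * (κ₁ * x ^ (κ₁ - 1)))) x :=
    ((Real.hasDerivAt_rpow_const (p := κ₁) (Or.inl hx0.ne')).const_mul (-(C / (2 * κ₁)))).exp
  have h4 := h2.mul h3.hasDerivWithinAt
  apply h4.mono_of_mem_nhdsWithin
  refine Filter.mem_of_superset (Ioc_mem_nhdsGT_of_mem ⟨le_refl x, hx1⟩) ?_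
  exact fun u hu => ⟨(hx0.trans hu.1).le, hu.2⟩

private lemma aux_bound (κ₁ κ₂ C : ℝ) (hκ₁ : 0 < κ₁) (hκ₂ : 0 < κ₂) (hC : 0 ≤ C)
    (fx Gx G'x : ℝ) (x : ℝ) (hx0 : 0 < x) (hx1 : x ≤ 1)
    (hfx : 0 ≤ fx) (hGx : 0 ≤ Gx)
    (hineq : G'x ≤ C * x ^ (κ₁ - 1) * Gx + fx * Real.sqrt Gx + C * x ^ (κ₂ - 1)) :
    1 / (2 * Real.sqrt (Gx + x ^ κ₂)) * (G'x + κ₂ * x ^ (κ₂ - 1))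
          * Real.exp (-(C / (2 * κ₁)) * x ^ κ₁)
        + Real.sqrt (Gx + x ^ κ₂)
          * (Real.exp (-(C / (2 * κ₁)) * x ^ κ₁) * (-(C / (2 * κ₁)) * (κ₁ * x ^ (κ₁ - 1))))
      ≤ fx / 2 + (C + κ₂) / 2 * x ^ (κ₂ / 2 - 1) := by
  have hGdx : 0 < Gx + x ^ κ₂ := add_pos_of_nonneg_of_pos hGx (Real.rpow_pos_of_pos hx0 _)
  set sx := Real.sqrt (Gx + x ^ κ₂) with hsxdef
  set Ex := Real.exp (-(C / (2 * κ₁)) * x ^ κ₁) with hExdef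
  have hsx : 0 < sx := Real.sqrt_pos.mpr hGdx
  have hsq : sx ^ 2 = Gx + x ^ κ₂ := Real.sq_sqrt hGdx.le
  have hpow : Real.sqrt (x ^ κ₂) = x ^ (κ₂ / 2) := by
    rw [Real.sqrt_eq_rpow, ← Real.rpow_mul hx0.le, mul_one_div]
  have hsx_ge : x ^ (κ₂ / 2) ≤ sx := by
    rw [← hpow]
    exact Real.sqrt_le_sqrt (le_add_of_nonneg_left hGx)
  have hsqrtG : Real.sqrt Gx ≤ sx :=
    Real.sqrt_le_sqrt (le_add_of_nonneg_right (Real.rpow_nonneg hx0.le _))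
  have hGle : Gx ≤ sx ^ 2 := by
    rw [hsq]; exact le_add_of_nonneg_right (Real.rpow_nonneg hx0.le _)
  have hpowmul : x ^ (κ₂ / 2 - 1) * x ^ (κ₂ / 2) = x ^ (κ₂ - 1) := by
    rw [← Real.rpow_add hx0]; ring_nf
  have hpownn : (0:ℝ) ≤ x ^ (κ₂ / 2 - 1) := Real.rpow_nonneg hx0.le _
  have hpownn1 : (0:ℝ) ≤ x ^ (κ₁ - 1) := Real.rpow_nonneg hx0.le _
  have hD : G'x + κ₂ * x ^ (κ₂ - 1)
      ≤ C * x ^ (κ₁ - 1) * sx ^ 2 + fx * sx + (C + κ₂) * x ^ (κ₂ - 1) := by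
    have h1 : C * x ^ (κ₁ - 1) * Gx ≤ C * x ^ (κ₁ - 1) * sx ^ 2 :=
      mul_le_mul_of_nonneg_left hGle (mul_nonneg hC hpownn1)
    have h2 : fx * Real.sqrt Gx ≤ fx * sx := mul_le_mul_of_nonneg_left hsqrtG hfx
    nlinarith
  have hE0 : 0 < Ex := Real.exp_pos _
  have hE1x : Ex ≤ 1 := by
    rw [hExdef]
    apply Real.exp_le_one_iff.mpr
    have h1 : (0:ℝ) ≤ x ^ κ₁ := Real.rpow_nonneg hx0.le _
    have h2 : (0:ℝ) ≤ C / (2 * κ₁) := by positivity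
    nlinarith
  have hA : 1 / (2 * sx) * (G'x + κ₂ * x ^ (κ₂ - 1))
      ≤ C / 2 * x ^ (κ₁ - 1) * sx + fx / 2 + (C + κ₂) / 2 * x ^ (κ₂ / 2 - 1) := by
    rw [div_mul_eq_mul_div, one_mul, div_le_iff₀ (by positivity)]
    have h5 : (C + κ₂) * x ^ (κ₂ - 1) ≤ (C + κ₂) * (x ^ (κ₂ / 2 - 1) * sx) := by
      apply mul_le_mul_of_nonneg_left _ (by positivity)
      rw [← hpowmul]
      exact mul_le_mul_of_nonneg_left hsx_ge hpownn
    nlinarith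
  have hcc : -(C / (2 * κ₁)) * (κ₁ * x ^ (κ₁ - 1)) = -(C / 2) * x ^ (κ₁ - 1) := by
    field_simp
  have hφnn : (0:ℝ) ≤ fx / 2 + (C + κ₂) / 2 * x ^ (κ₂ / 2 - 1) := by positivity
  rw [hcc]
  clear_value sx Ex
  nlinarith [mul_le_mul_of_nonneg_right hA hE0.le, mul_nonneg hφnn (sub_nonneg.mpr hE1x)]

private lemma aux_cont (κ₁ κ₂ C : ℝ) (hκ₁ : 0 < κ₁) (hκ₂ : 0 < κ₂) (G : ℝ → ℝ)
    (hGc : ContinuousOn G (Icc (0:ℝ) 1)) :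
    ContinuousOn (fun u => Real.sqrt (G u + u ^ κ₂) * Real.exp (-(C / (2 * κ₁)) * u ^ κ₁))
      (Icc (0:ℝ) 1) :=
  (Real.continuous_sqrt.comp_continuousOn
      (hGc.add (Real.continuous_rpow_const hκ₂.le).continuousOn)).mul
    (Real.continuous_exp.comp
      (continuous_const.mul (Real.continuous_rpow_const hκ₁.le))).continuousOn

private lemma aux_key (κ₁ κ₂ C : ℝ) (hκ₁ : 0 < κ₁) (hκ₂ : 0 < κ₂) (hC : 0 ≤ C)
    (f G G' : ℝ → ℝ)
    (hfpos : ∀ t ∈ Ioc (0:ℝ) 1, 0 ≤ f t)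
    (hfint : IntegrableOn f (Ioc (0:ℝ) 1))
    (hGc : ContinuousOn G (Icc (0:ℝ) 1))
    (hGpos : ∀ t ∈ Icc (0:ℝ) 1, 0 ≤ G t)
    (hGd : ∀ t ∈ Ioc (0:ℝ) 1, HasDerivWithinAt G (G' t) (Icc (0:ℝ) 1) t)
    (hineq : ∀ t ∈ Ioc (0:ℝ) 1,
      G' t ≤ C * t ^ (κ₁ - 1) * G t + f t * Real.sqrt (G t) + C * t ^ (κ₂ - 1))
    (t : ℝ) (h0 : 0 < t) (ht1 : t ≤ 1) (s : ℝ) (hs0 : 0 < s) (hst : s ≤ t) :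
    Real.sqrt (G t + t ^ κ₂) * Real.exp (-(C / (2 * κ₁)) * t ^ κ₁)
      - Real.sqrt (G s + s ^ κ₂) * Real.exp (-(C / (2 * κ₁)) * s ^ κ₁)
      ≤ (∫ u in Ioo (0:ℝ) t, f u) / 2 + (C + κ₂) / κ₂ * t ^ (κ₂ / 2) := by
  have hIoosub : Ioo (0:ℝ) t ⊆ Ioc (0:ℝ) 1 := fun u hu => ⟨hu.1, hu.2.le.trans ht1⟩
  have hFint : IntegrableOn f (Ioo (0:ℝ) t) := hfint.mono_set hIoosub
  have hsubIoc : Icc s t ⊆ Ioc (0:ℝ) 1 := fun u hu => ⟨hs0.trans_le hu.1, hu.2.trans ht1⟩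
  have hsubIcc : Icc s t ⊆ Icc (0:ℝ) 1 := fun u hu => ⟨(hs0.trans_le hu.1).le, hu.2.trans ht1⟩
  have hder : ∀ x ∈ Ioo s t,
      HasDerivWithinAt (fun u => Real.sqrt (G u + u ^ κ₂) * Real.exp (-(C / (2 * κ₁)) * u ^ κ₁))
        (1 / (2 * Real.sqrt (G x + x ^ κ₂)) * (G' x + κ₂ * x ^ (κ₂ - 1))
            * Real.exp (-(C / (2 * κ₁)) * x ^ κ₁)
          + Real.sqrt (G x + x ^ κ₂)
            * (Real.exp (-(C / (2 * κ₁)) * x ^ κ₁) * (-(C / (2 * κ₁)) * (κ₁ * x ^ (κ₁ - 1)))))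
        (Ioi x) x := by
    intro x hx
    have hx0 : 0 < x := hs0.trans hx.1
    have hx1 : x < 1 := hx.2.trans_le ht1
    have hGx : 0 < G x + x ^ κ₂ :=
      add_pos_of_nonneg_of_pos (hGpos x ⟨hx0.le, hx1.le⟩) (Real.rpow_pos_of_pos hx0 _)
    exact aux_deriv κ₁ κ₂ C G G' x hx0 hx1 hGx (hGd x ⟨hx0, hx1.le⟩)
  have hbound : ∀ x ∈ Ioo s t,
      1 / (2 * Real.sqrt (G x + x ^ κ₂)) * (G' x + κ₂ * x ^ (κ₂ - 1))
          * Real.exp (-(C / (2 * κ₁)) * x ^ κ₁)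
        + Real.sqrt (G x + x ^ κ₂)
          * (Real.exp (-(C / (2 * κ₁)) * x ^ κ₁) * (-(C / (2 * κ₁)) * (κ₁ * x ^ (κ₁ - 1))))
      ≤ f x / 2 + (C + κ₂) / 2 * x ^ (κ₂ / 2 - 1) := by
    intro x hx
    have hx0 : 0 < x := hs0.trans hx.1
    have hx1 : x ≤ 1 := (hx.2.trans_le ht1).le
    exact aux_bound κ₁ κ₂ C hκ₁ hκ₂ hC (f x) (G x) (G' x) x hx0 hx1
      (hfpos x ⟨hx0, hx1⟩) (hGpos x ⟨hx0.le, hx1⟩) (hineq x ⟨hx0, hx1⟩)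
  have hφint : IntegrableOn (fun u => f u / 2 + (C + κ₂) / 2 * u ^ (κ₂ / 2 - 1)) (Icc s t) := by
    apply Integrable.add
    · exact (hfint.mono_set hsubIoc).div_const 2
    · apply ContinuousOn.integrableOn_Icc
      apply continuousOn_const.mul
      intro u hu
      exact (Real.continuousAt_rpow_const u _
        (Or.inl (hs0.trans_le hu.1).ne')).continuousWithinAt
  have hftc := sub_le_integral_of_hasDeriv_right_of_le hst
    ((aux_cont κ₁ κ₂ C hκ₁ hκ₂ G hGc).mono hsubIcc) hder hφint hbound
  have hi1 : IntervalIntegrable (fun u => f u / 2) volume s t :=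
    (intervalIntegrable_iff_integrableOn_Ioc_of_le hst).mpr
      ((hfint.mono_set (fun u hu => ⟨hs0.trans hu.1, hu.2.trans ht1⟩)).div_const 2)
  have hr : (-1:ℝ) < κ₂ / 2 - 1 := by linarith
  have hii : ∀ a b : ℝ, IntervalIntegrable (fun u : ℝ => u ^ (κ₂ / 2 - 1)) volume a b :=
    fun a b => intervalIntegral.intervalIntegrable_rpow' hr
  have hi2 : IntervalIntegrable (fun u : ℝ => (C + κ₂) / 2 * u ^ (κ₂ / 2 - 1)) volume s t :=
    (hii s t).const_mul _
  have hint1 : ∫ u in s..t, f u / 2 ≤ (∫ u in Ioo (0:ℝ) t, f u) / 2 := by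
    rw [intervalIntegral.integral_div]
    have h6 : ∫ u in s..t, f u ≤ ∫ u in Ioo (0:ℝ) t, f u := by
      rw [intervalIntegral.integral_of_le hst, integral_Ioc_eq_integral_Ioo]
      apply setIntegral_mono_set hFint
      · exact (ae_restrict_iff' measurableSet_Ioo).2
          (Filter.Eventually.of_forall fun u hu => hfpos u (hIoosub hu))
      · exact HasSubset.Subset.eventuallyLE (Ioo_subset_Ioo_left hs0.le)
    linarith
  have hint2 : ∫ u in s..t, (C + κ₂) / 2 * u ^ (κ₂ / 2 - 1)
      ≤ (C + κ₂) / κ₂ * t ^ (κ₂ / 2) := by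
    rw [intervalIntegral.integral_const_mul]
    have hexp : κ₂ / 2 - 1 + 1 = κ₂ / 2 := by ring
    have h0t : ∫ u in (0:ℝ)..t, u ^ (κ₂ / 2 - 1) = t ^ (κ₂ / 2) / (κ₂ / 2) := by
      rw [integral_rpow (Or.inl hr), hexp, Real.zero_rpow (by positivity : κ₂ / 2 ≠ 0)]
      ring
    have hsplit := intervalIntegral.integral_add_adjacent_intervals (hii 0 s) (hii s t)
    have h0s : 0 ≤ ∫ u in (0:ℝ)..s, u ^ (κ₂ / 2 - 1) :=
      intervalIntegral.integral_nonneg hs0.le fun u hu => Real.rpow_nonneg hu.1 _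
    have h7 : ∫ u in s..t, u ^ (κ₂ / 2 - 1) ≤ t ^ (κ₂ / 2) / (κ₂ / 2) := by
      rw [← h0t, ← hsplit]; linarith
    have hc2 : (0:ℝ) ≤ (C + κ₂) / 2 := by positivity
    calc (C + κ₂) / 2 * ∫ u in s..t, u ^ (κ₂ / 2 - 1)
        ≤ (C + κ₂) / 2 * (t ^ (κ₂ / 2) / (κ₂ / 2)) := mul_le_mul_of_nonneg_left h7 hc2
      _ = (C + κ₂) / κ₂ * t ^ (κ₂ / 2) := by field_simp
  have h8 : ∫ u in s..t, (f u / 2 + (C + κ₂) / 2 * u ^ (κ₂ / 2 - 1))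
      = (∫ u in s..t, f u / 2) + ∫ u in s..t, (C + κ₂) / 2 * u ^ (κ₂ / 2 - 1) :=
    intervalIntegral.integral_add hi1 hi2
  rw [h8] at hftc
  linarith

/-- Differential inequality lemma (Lemma 2.1 of the paper). -/
theorem stmt_0 (κ₁ κ₂ C : ℝ) (hκ₁ : 0 < κ₁) (hκ₂ : 0 < κ₂) (hC : 0 ≤ C) :
    ∃ C' > (0:ℝ), ∀ (f G G' : ℝ → ℝ),
      ContinuousOn f (Ioc (0:ℝ) 1) →
      (∀ t ∈ Ioc (0:ℝ) 1, 0 ≤ f t) →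
      IntegrableOn f (Ioc (0:ℝ) 1) →
      ContinuousOn G (Icc (0:ℝ) 1) →
      (∀ t ∈ Icc (0:ℝ) 1, 0 ≤ G t) →
      (∀ t ∈ Ioc (0:ℝ) 1, HasDerivWithinAt G (G' t) (Icc (0:ℝ) 1) t) →
      G 0 = 0 →
      (∀ t ∈ Ioc (0:ℝ) 1,
        G' t ≤ C * t ^ (κ₁ - 1) * G t + f t * Real.sqrt (G t) + C * t ^ (κ₂ - 1)) →
      ∀ t ∈ Icc (0:ℝ) 1, G t ≤ C' * ((∫ u in Ioo (0:ℝ) t, f u) ^ 2 + t ^ κ₂) := by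
  refine ⟨Real.exp (C / κ₁) * (1 + 2 * ((C + κ₂) / κ₂) ^ 2), by positivity, ?_⟩
  intro f G G' hfc hfpos hfint hGc hGpos hGd hG0 hineq t ht
  rcases eq_or_lt_of_le ht.1 with h0 | h0
  · subst h0
    simp [hG0, Real.zero_rpow hκ₂.ne']
  have ht1 : t ≤ 1 := ht.2
  set c₃ : ℝ := (C + κ₂) / κ₂ with hc₃def
  have hc₃ : 0 ≤ c₃ := by positivity
  set F : ℝ := ∫ u in Ioo (0:ℝ) t, f u with hFdef
  have hIoosub : Ioo (0:ℝ) t ⊆ Ioc (0:ℝ) 1 := fun u hu => ⟨hu.1, hu.2.le.trans ht1⟩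
  have hF0 : 0 ≤ F :=
    setIntegral_nonneg measurableSet_Ioo fun u hu => hfpos u (hIoosub hu)
  -- the limit s → 0⁺ of the key inequality
  have hzt : Real.sqrt (G t + t ^ κ₂) * Real.exp (-(C / (2 * κ₁)) * t ^ κ₁)
      ≤ F / 2 + c₃ * t ^ (κ₂ / 2) := by
    haveI : Filter.NeBot (nhdsWithin 0 (Ioc (0:ℝ) t)) := left_nhdsWithin_Ioc_neBot h0
    have htend : Filter.Tendsto
        (fun u => Real.sqrt (G u + u ^ κ₂) * Real.exp (-(C / (2 * κ₁)) * u ^ κ₁))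
        (nhdsWithin 0 (Ioc (0:ℝ) t)) (nhds 0) := by
      have h := ((aux_cont κ₁ κ₂ C hκ₁ hκ₂ G hGc) 0 ⟨le_refl 0, zero_le_one⟩).mono
        (show Ioc (0:ℝ) t ⊆ Icc (0:ℝ) 1 from fun u hu => ⟨hu.1.le, hu.2.trans ht1⟩)
      simpa [ContinuousWithinAt, hG0, Real.zero_rpow hκ₂.ne', Real.zero_rpow hκ₁.ne'] using h
    have hev : ∀ᶠ s in nhdsWithin 0 (Ioc (0:ℝ) t),
        Real.sqrt (G t + t ^ κ₂) * Real.exp (-(C / (2 * κ₁)) * t ^ κ₁)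
          - (F / 2 + c₃ * t ^ (κ₂ / 2))
        ≤ Real.sqrt (G s + s ^ κ₂) * Real.exp (-(C / (2 * κ₁)) * s ^ κ₁) := by
      apply eventually_nhdsWithin_of_forall
      intro s hs
      have := aux_key κ₁ κ₂ C hκ₁ hκ₂ hC f G G' hfpos hfint hGc hGpos hGd hineq
        t h0 ht1 s hs.1 hs.2
      rw [hc₃def]
      linarith
    have := ge_of_tendsto htend hev
    linarith
  have hInn : 0 ≤ F / 2 + c₃ * t ^ (κ₂ / 2) := by
    have := Real.rpow_nonneg h0.le (κ₂ / 2)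
    positivity
  have hyt : Real.sqrt (G t + t ^ κ₂)
      ≤ Real.exp (C / (2 * κ₁)) * (F / 2 + c₃ * t ^ (κ₂ / 2)) := by
    have hexple : Real.exp (C / (2 * κ₁) * t ^ κ₁) ≤ Real.exp (C / (2 * κ₁)) := by
      apply Real.exp_le_exp.mpr
      have h9 : t ^ κ₁ ≤ 1 := Real.rpow_le_one h0.le ht1 hκ₁.le
      have h10 : (0:ℝ) ≤ C / (2 * κ₁) := by positivity
      nlinarith
    have heq : Real.sqrt (G t + t ^ κ₂)
        = (Real.sqrt (G t + t ^ κ₂) * Real.exp (-(C / (2 * κ₁)) * t ^ κ₁))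
          * Real.exp (C / (2 * κ₁) * t ^ κ₁) := by
      rw [mul_assoc, ← Real.exp_add,
        show -(C / (2 * κ₁)) * t ^ κ₁ + C / (2 * κ₁) * t ^ κ₁ = 0 by ring,
        Real.exp_zero, mul_one]
    rw [heq]
    calc (Real.sqrt (G t + t ^ κ₂) * Real.exp (-(C / (2 * κ₁)) * t ^ κ₁))
          * Real.exp (C / (2 * κ₁) * t ^ κ₁)
        ≤ (F / 2 + c₃ * t ^ (κ₂ / 2)) * Real.exp (C / (2 * κ₁)) :=
          mul_le_mul hzt hexple (Real.exp_pos _).le hInn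
      _ = Real.exp (C / (2 * κ₁)) * (F / 2 + c₃ * t ^ (κ₂ / 2)) := by ring
  have hGdnn : 0 ≤ G t + t ^ κ₂ := add_nonneg (hGpos t ht) (Real.rpow_nonneg h0.le _)
  have hGdt : G t + t ^ κ₂ = Real.sqrt (G t + t ^ κ₂) ^ 2 := (Real.sq_sqrt hGdnn).symm
  have hsq2 : Real.sqrt (G t + t ^ κ₂) ^ 2
      ≤ (Real.exp (C / (2 * κ₁)) * (F / 2 + c₃ * t ^ (κ₂ / 2))) ^ 2 :=
    pow_le_pow_left₀ (Real.sqrt_nonneg _) hyt 2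
  have hexp2 : Real.exp (C / (2 * κ₁)) ^ 2 = Real.exp (C / κ₁) := by
    rw [sq, ← Real.exp_add]
    congr 1
    field_simp
    ring
  have hpow2 : t ^ (κ₂ / 2) * t ^ (κ₂ / 2) = t ^ κ₂ := by
    rw [← Real.rpow_add h0]
    ring_nf
  have hTnn : (0:ℝ) ≤ t ^ (κ₂ / 2) := Real.rpow_nonneg h0.le _
  have hsqle : (F / 2 + c₃ * t ^ (κ₂ / 2)) ^ 2 ≤ (1 + 2 * c₃ ^ 2) * (F ^ 2 + t ^ κ₂) := by
    nlinarith [sq_nonneg (F / 2 - c₃ * t ^ (κ₂ / 2)), sq_nonneg F, sq_nonneg (t ^ (κ₂ / 2)),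
      mul_nonneg hc₃ hTnn, hF0]
  have hfinal : G t + t ^ κ₂ ≤ Real.exp (C / κ₁) * ((1 + 2 * c₃ ^ 2) * (F ^ 2 + t ^ κ₂)) := by
    rw [hGdt]
    calc Real.sqrt (G t + t ^ κ₂) ^ 2
        ≤ (Real.exp (C / (2 * κ₁)) * (F / 2 + c₃ * t ^ (κ₂ / 2))) ^ 2 := hsq2
      _ = Real.exp (C / κ₁) * (F / 2 + c₃ * t ^ (κ₂ / 2)) ^ 2 := by
          rw [mul_pow, hexp2]
      _ ≤ Real.exp (C / κ₁) * ((1 + 2 * c₃ ^ 2) * (F ^ 2 + t ^ κ₂)) :=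
          mul_le_mul_of_nonneg_left hsqle (Real.exp_pos _).le
  have hGt : G t ≤ G t + t ^ κ₂ := le_add_of_nonneg_right (Real.rpow_nonneg h0.le _)
  calc G t ≤ G t + t ^ κ₂ := hGt
    _ ≤ Real.exp (C / κ₁) * ((1 + 2 * c₃ ^ 2) * (F ^ 2 + t ^ κ₂)) := hfinal
    _ = Real.exp (C / κ₁) * (1 + 2 * c₃ ^ 2) * (F ^ 2 + t ^ κ₂) := by ring
end

section
/- Let Q : ℝ → ℝ be a ground state and set m₀ = (1/4)∫_ℝ Q. Let P : ℝ → ℝ be three times continuously differentiable and bounded, with P' and P'' bounded and tending to 0 at ±∞ and with P', P'' integrable, satisfying: (−P'' + P − 5Q⁴P)'(y) = (1/2)Q(y) + y Q'(y) for all y ∈ ℝ, lim_{y→−∞} P(y) = 2m₀, and lim_{y→+∞} P(y) = 0. Then ∫_ℝ P(y) Q(y)⁵ dy = −m₀². -/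
/-!
Write `F(y) = ∫_{-∞}^y Q`. Both `𝓛P` and `R(y) = y Q(y) - F(y)/2 + 2m₀` are antiderivatives
of `ΛQ` vanishing at `+∞` (there `F → 4m₀`), hence `𝓛P = R`. Now pair with `Q`. Since `𝓛` is
symmetric and `𝓛Q = -4Q⁵` by the ground state equation, `∫ (𝓛P) Q = ∫ P 𝓛Q = -4 ∫ P Q⁵`.
On the other side `∫ y Q² = 0` because `Q` is even, and `∫ F Q = F(∞)²/2 = 8m₀²`,
so `∫ R Q = -4m₀² + 8m₀² = 4m₀²`.
-/

open MeasureTheory Filter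

/-- A ground state: a smooth, even, positive solution of `Q'' + Q⁵ = Q` on `ℝ`,
all of whose derivatives decay exponentially. -/
def IsGroundState (Q : ℝ → ℝ) : Prop :=
  ContDiff ℝ (⊤ : ℕ∞) Q ∧ (∀ y : ℝ, 0 < Q y) ∧ (∀ y : ℝ, Q (-y) = Q y) ∧
  (∀ y : ℝ, deriv (deriv Q) y + Q y ^ 5 = Q y) ∧
  ∀ k : ℕ, ∃ C > (0:ℝ), ∀ y : ℝ, |iteratedDeriv k Q y| ≤ C * Real.exp (-|y|)

open Set Topology

theorem integrable_exp_neg_abs : Integrable fun y : ℝ => Real.exp (-|y|) := by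
  rw [← integrableOn_univ, ← Iic_union_Ioi (a := 0)]
  refine IntegrableOn.union ((integrableOn_exp_Iic 0).congr_fun (fun y hy => ?_) measurableSet_Iic)
    ((exp_neg_integrableOn_Ioi 0 one_pos).congr_fun (fun y hy => ?_) measurableSet_Ioi)
  · rw [abs_of_nonpos hy, neg_neg]
  · simp [abs_of_pos (mem_Ioi.mp hy)]

theorem Continuous.integrable_of_abs_le_exp_neg_abs {f : ℝ → ℝ} (hf : Continuous f) {C : ℝ}
    (h : ∀ y, |f y| ≤ C * Real.exp (-|y|)) : Integrable f :=
  (integrable_exp_neg_abs.const_mul C).mono' hf.aestronglyMeasurable (ae_of_all _ h)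

theorem tendsto_exp_neg_abs_cocompact :
    Tendsto (fun y : ℝ => Real.exp (-|y|)) (cocompact ℝ) (𝓝 0) :=
  Real.tendsto_exp_atBot.comp (tendsto_neg_atTop_atBot.comp tendsto_norm_cocompact_atTop)

theorem tendsto_abs_mul_exp_neg_abs_cocompact :
    Tendsto (fun y : ℝ => |y| * Real.exp (-|y|)) (cocompact ℝ) (𝓝 0) :=
  ((Real.tendsto_pow_mul_exp_neg_atTop_nhds_zero 1).comp tendsto_norm_cocompact_atTop).congr
    fun y => by simp

theorem abs_mul_exp_neg_abs_le_one (y : ℝ) : |y| * Real.exp (-|y|) ≤ 1 := by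
  rw [Real.exp_neg, ← div_eq_mul_inv, div_le_one (Real.exp_pos _)]
  linarith [Real.add_one_le_exp |y|]

theorem MeasureTheory.Integrable.mul_of_continuous_of_abs_le {f g : ℝ → ℝ} (hf : Integrable f)
    (hg : Continuous g) {M : ℝ} (hM : ∀ y, |g y| ≤ M) : Integrable fun y => f y * g y :=
  hf.mul_bdd hg.aestronglyMeasurable (ae_of_all _ hM)

theorem ContDiff.continuous_deriv_deriv {f : ℝ → ℝ} {n : WithTop ℕ∞} (hf : ContDiff ℝ n f)
    (hn : 2 ≤ n) : Continuous (deriv (deriv f)) := by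
  have h := hf.continuous_iteratedDeriv 2 hn
  rw [iteratedDeriv_eq_iterate] at h
  exact h

theorem integral_mul_deriv_deriv_eq_deriv_deriv_mul {u v : ℝ → ℝ}
    (hu : ContDiff ℝ 2 u) (hv : ContDiff ℝ 2 v)
    (hui : Integrable u) (hu'i : Integrable (deriv u)) (hu''i : Integrable (deriv (deriv u)))
    {M₀ M₁ M₂ : ℝ} (hv₀ : ∀ y, |v y| ≤ M₀) (hv₁ : ∀ y, |deriv v y| ≤ M₁)
    (hv₂ : ∀ y, |deriv (deriv v) y| ≤ M₂) :
    ∫ y, u y * deriv (deriv v) y = ∫ y, deriv (deriv u) y * v y := by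
  -- integrability of `u v'` and `u' v` makes the boundary terms of the integrations by parts vanish
  have hu' := hu.differentiable_deriv_two
  have hv' := hv.differentiable_deriv_two
  have hv'c := hv'.continuous
  have huv' := hui.mul_of_continuous_of_abs_le hv'c hv₁
  have hu'v' := hu'i.mul_of_continuous_of_abs_le hv'c hv₁
  have hu'v := hu'i.mul_of_continuous_of_abs_le hv.continuous hv₀
  rw [integral_mul_deriv_eq_deriv_mul_of_integrable
      (fun x _ => (hu.differentiable (by norm_num) x).hasDerivAt) (fun x _ => (hv' x).hasDerivAt)
      (hui.mul_of_continuous_of_abs_le (hv.continuous_deriv_deriv le_rfl) hv₂) hu'v' huv',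
    integral_mul_deriv_eq_deriv_mul_of_integrable (fun x _ => (hu' x).hasDerivAt)
      (fun x _ => (hv.differentiable (by norm_num) x).hasDerivAt)
      hu'v' (hu''i.mul_of_continuous_of_abs_le hv.continuous hv₀) hu'v, neg_neg]

theorem eq_of_hasDerivAt_of_tendsto {f g f' : ℝ → ℝ} {l : Filter ℝ} [l.NeBot] {a : ℝ}
    (hf : ∀ x, HasDerivAt f (f' x) x) (hg : ∀ x, HasDerivAt g (f' x) x)
    (hfa : Tendsto f l (𝓝 a)) (hga : Tendsto g l (𝓝 a)) : f = g := by
  have hconst (x : ℝ) : f x - g x = f 0 - g 0 :=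
    is_const_of_deriv_eq_zero (fun x => ((hf x).sub (hg x)).differentiableAt)
      (fun x => by simpa using ((hf x).sub (hg x)).deriv) x 0
  have hzero : f 0 - g 0 = 0 :=
    tendsto_nhds_unique (tendsto_const_nhds.congr fun x => (hconst x).symm)
      (by simpa using hfa.sub hga)
  funext x
  linarith [hconst x]

section Primitive

variable {f : ℝ → ℝ}

theorem hasDerivAt_integral_Iic (hf : Continuous f) (hfi : Integrable f) (y : ℝ) :
    HasDerivAt (fun x => ∫ t in Iic x, f t) (f y) y := by
  have h := (intervalIntegral.integral_hasDerivAt_right (a := 0) (b := y) hfi.intervalIntegrable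
    (hf.stronglyMeasurableAtFilter _ _) hf.continuousAt).const_add (∫ t in Iic 0, f t)
  refine h.congr_of_eventuallyEq (Eventually.of_forall fun x => ?_)
  dsimp only
  rw [← intervalIntegral.integral_Iic_sub_Iic hfi.integrableOn hfi.integrableOn]
  ring

theorem tendsto_integral_Iic_atTop (hfi : Integrable f) :
    Tendsto (fun x => ∫ t in Iic x, f t) atTop (𝓝 (∫ t, f t)) := by
  simpa [iUnion_Iic] using
    tendsto_setIntegral_of_monotone (fun _ => measurableSet_Iic)
      (fun _ _ h => Iic_subset_Iic.mpr h) (s := Iic) hfi.integrableOn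

theorem abs_integral_Iic_le (hfi : Integrable f) (y : ℝ) :
    |∫ t in Iic y, f t| ≤ ∫ t, |f t| :=
  (abs_integral_le_integral_abs).trans
    (setIntegral_le_integral hfi.abs (ae_of_all _ fun _ => abs_nonneg _))

theorem integrable_integral_Iic_mul (hf : Continuous f) (hfi : Integrable f) :
    Integrable fun y => (∫ t in Iic y, f t) * f y :=
  hfi.bdd_mul (continuous_iff_continuousAt.mpr fun y =>
    (hasDerivAt_integral_Iic hf hfi y).continuousAt).aestronglyMeasurable
    (ae_of_all _ (abs_integral_Iic_le hfi))

theorem integral_integral_Iic_mul (hf : Continuous f) (hfi : Integrable f) :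
    ∫ y, (∫ t in Iic y, f t) * f y = (∫ t, f t) ^ 2 / 2 := by
  set F := fun x => ∫ t in Iic x, f t
  have hderiv (y : ℝ) : HasDerivAt (fun x => F x * F x / 2) (F y * f y) y :=
    (((hasDerivAt_integral_Iic hf hfi y).mul (hasDerivAt_integral_Iic hf hfi y)).div_const
      2).congr_deriv (by ring)
  have hint := integrable_integral_Iic_mul hf hfi
  have hbot : Tendsto (fun x => F x * F x / 2) atBot (𝓝 0) := by
    simpa using ((tendsto_integral_Iic_zero (μ := volume) tendsto_id).mul
      (tendsto_integral_Iic_zero (μ := volume) tendsto_id)).div_const (2 : ℝ)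
  rw [integral_of_hasDerivAt_of_tendsto hderiv hint hbot
    (((tendsto_integral_Iic_atTop hfi).mul (tendsto_integral_Iic_atTop hfi)).div_const 2), sq,
    sub_zero]

end Primitive

namespace IsGroundState

variable {Q : ℝ → ℝ}

theorem contDiff (hQ : IsGroundState Q) {n : ℕ∞} : ContDiff ℝ n Q :=
  hQ.1.of_le (WithTop.coe_le_coe.mpr le_top)

theorem continuous (hQ : IsGroundState Q) : Continuous Q :=
  (hQ.contDiff (n := 0)).continuous

theorem differentiable (hQ : IsGroundState Q) : Differentiable ℝ Q :=
  (hQ.contDiff (n := 1)).differentiable one_ne_zero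

theorem exists_abs_le_mul_exp_neg_abs (hQ : IsGroundState Q) :
    ∃ C > 0, ∀ y, |Q y| ≤ C * Real.exp (-|y|) := by
  simpa using hQ.2.2.2.2 0

theorem exists_abs_le (hQ : IsGroundState Q) : ∃ C, ∀ y, |Q y| ≤ C := by
  obtain ⟨C, hC0, hC⟩ := hQ.exists_abs_le_mul_exp_neg_abs
  exact ⟨C, fun y => (hC y).trans (mul_le_of_le_one_right hC0.le (by simp))⟩

theorem integrable_iteratedDeriv (hQ : IsGroundState Q) (k : ℕ) :
    Integrable (iteratedDeriv k Q) := by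
  obtain ⟨C, -, hC⟩ := hQ.2.2.2.2 k
  exact (hQ.contDiff.continuous_iteratedDeriv' k).integrable_of_abs_le_exp_neg_abs hC

theorem integrable (hQ : IsGroundState Q) : Integrable Q := by
  simpa using hQ.integrable_iteratedDeriv 0

theorem integrable_deriv (hQ : IsGroundState Q) : Integrable (deriv Q) := by
  simpa using hQ.integrable_iteratedDeriv 1

theorem integrable_deriv_deriv (hQ : IsGroundState Q) : Integrable (deriv (deriv Q)) := by
  simpa [iteratedDeriv_eq_iterate] using hQ.integrable_iteratedDeriv 2

theorem deriv_deriv_apply (hQ : IsGroundState Q) (y : ℝ) : deriv (deriv Q) y = Q y - Q y ^ 5 := by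
  linarith [hQ.2.2.2.1 y]

theorem tendsto_atTop (hQ : IsGroundState Q) : Tendsto Q atTop (𝓝 0) := by
  obtain ⟨C, -, hC⟩ := hQ.exists_abs_le_mul_exp_neg_abs
  exact squeeze_zero_norm hC <| by
    simpa using (tendsto_exp_neg_abs_cocompact.const_mul C).mono_left atTop_le_cocompact

theorem tendsto_mul_atTop (hQ : IsGroundState Q) : Tendsto (fun y => y * Q y) atTop (𝓝 0) := by
  obtain ⟨C, -, hC⟩ := hQ.exists_abs_le_mul_exp_neg_abs
  refine squeeze_zero_norm (a := fun y => C * (|y| * Real.exp (-|y|))) (fun y => ?_) <| by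
    simpa using (tendsto_abs_mul_exp_neg_abs_cocompact.const_mul C).mono_left atTop_le_cocompact
  rw [Real.norm_eq_abs, abs_mul]
  nlinarith [hC y, abs_nonneg y]

theorem exists_abs_mul_le (hQ : IsGroundState Q) : ∃ C, ∀ y, |y * Q y| ≤ C := by
  obtain ⟨C, hC0, hC⟩ := hQ.exists_abs_le_mul_exp_neg_abs
  refine ⟨C, fun y => ?_⟩
  calc |y * Q y| ≤ |y| * (C * Real.exp (-|y|)) := by
        rw [abs_mul]; exact mul_le_mul_of_nonneg_left (hC y) (abs_nonneg y)
    _ = C * (|y| * Real.exp (-|y|)) := by ring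
    _ ≤ C := mul_le_of_le_one_right hC0.le (abs_mul_exp_neg_abs_le_one y)

theorem integral_mul_sq_eq_zero (hQ : IsGroundState Q) : ∫ y, y * Q y ^ 2 = 0 := by
  have h := integral_neg_eq_self (fun y => y * Q y ^ 2) volume
  simp only [hQ.2.2.1, neg_mul, integral_neg] at h
  linarith

theorem integral_linearized_mul (hQ : IsGroundState Q) {P : ℝ → ℝ} (hP : ContDiff ℝ 2 P)
    {M₀ M₁ M₂ : ℝ} (hP₀ : ∀ y, |P y| ≤ M₀) (hP₁ : ∀ y, |deriv P y| ≤ M₁)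
    (hP₂ : ∀ y, |deriv (deriv P) y| ≤ M₂) :
    ∫ y, (-deriv (deriv P) y + P y - 5 * Q y ^ 4 * P y) * Q y = -4 * ∫ y, P y * Q y ^ 5 := by
  obtain ⟨C, hC⟩ := hQ.exists_abs_le
  have hPQ : Integrable fun y => P y * Q y :=
    (hQ.integrable.mul_of_continuous_of_abs_le hP.continuous hP₀).congr
      (ae_of_all _ fun y => mul_comm _ _)
  have hPQ5 : Integrable fun y => P y * Q y ^ 5 :=
    (hQ.integrable.mul_of_continuous_of_abs_le (g := fun y => Q y ^ 4 * P y)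
      ((hQ.continuous.pow 4).mul hP.continuous)
      fun y => by
        rw [abs_mul, abs_pow]
        exact mul_le_mul (pow_le_pow_left₀ (abs_nonneg _) (hC y) 4) (hP₀ y) (abs_nonneg _)
          (pow_nonneg ((abs_nonneg _).trans (hC 0)) 4)).congr
      (ae_of_all _ fun y => by ring)
  have hQP'' := hQ.integrable.mul_of_continuous_of_abs_le (hP.continuous_deriv_deriv le_rfl) hP₂
  have hsa : ∫ y, Q y * deriv (deriv P) y = ∫ y, P y * Q y - P y * Q y ^ 5 := by
    rw [integral_mul_deriv_deriv_eq_deriv_deriv_mul hQ.contDiff hP hQ.integrable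
      hQ.integrable_deriv hQ.integrable_deriv_deriv hP₀ hP₁ hP₂]
    congr 1; ext y; rw [hQ.deriv_deriv_apply]; ring
  calc ∫ y, (-deriv (deriv P) y + P y - 5 * Q y ^ 4 * P y) * Q y
      = ∫ y, P y * Q y - 5 * (P y * Q y ^ 5) - Q y * deriv (deriv P) y := by
        congr 1; ext y; ring
    _ = (∫ y, P y * Q y) - 5 * (∫ y, P y * Q y ^ 5) - ∫ y, Q y * deriv (deriv P) y := by
        rw [integral_sub (hPQ.sub' (hPQ5.const_mul 5)) hQP'', integral_sub hPQ (hPQ5.const_mul 5),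
          integral_const_mul]
    _ = -4 * ∫ y, P y * Q y ^ 5 := by
        rw [hsa, integral_sub hPQ hPQ5]; ring

theorem hasDerivAt_mul_sub_integral_Iic (hQ : IsGroundState Q) (c y : ℝ) :
    HasDerivAt (fun x => x * Q x - (∫ t in Iic x, Q t) / 2 + c)
      (1 / 2 * Q y + y * deriv Q y) y :=
  ((((hasDerivAt_id y).mul (hQ.differentiable y).hasDerivAt).sub
    ((hasDerivAt_integral_Iic hQ.continuous hQ.integrable y).div_const 2)).add_const
    c).congr_deriv (by simp; ring)

theorem tendsto_mul_sub_integral_Iic_atTop (hQ : IsGroundState Q) (c : ℝ) :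
    Tendsto (fun x => x * Q x - (∫ t in Iic x, Q t) / 2 + c) atTop
      (𝓝 (c - (∫ t, Q t) / 2)) := by
  have h := (hQ.tendsto_mul_atTop.sub
    ((tendsto_integral_Iic_atTop hQ.integrable).div_const 2)).add_const c
  rwa [zero_sub, neg_add_eq_sub] at h

theorem integral_mul_sub_integral_Iic_mul (hQ : IsGroundState Q) (c : ℝ) :
    ∫ y, (y * Q y - (∫ t in Iic y, Q t) / 2 + c) * Q y
      = c * (∫ t, Q t) - (∫ t, Q t) ^ 2 / 4 := by
  obtain ⟨C, hC⟩ := hQ.exists_abs_mul_le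
  have hyQ2 : Integrable fun y => y * Q y ^ 2 :=
    (hQ.integrable.mul_of_continuous_of_abs_le (g := fun y => y * Q y)
      (continuous_id.mul hQ.continuous) hC).congr (ae_of_all _ fun y => by ring)
  have hFQ := integrable_integral_Iic_mul hQ.continuous hQ.integrable
  calc ∫ y, (y * Q y - (∫ t in Iic y, Q t) / 2 + c) * Q y
      = ∫ y, (y * Q y ^ 2 - (∫ t in Iic y, Q t) * Q y / 2 + c * Q y) := by
        congr 1; ext y; ring
    _ = (∫ y, y * Q y ^ 2) - (∫ y, (∫ t in Iic y, Q t) * Q y) / 2 + c * ∫ t, Q t := by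
        rw [integral_add (hyQ2.sub' (hFQ.div_const 2)) (hQ.integrable.const_mul c),
          integral_sub hyQ2 (hFQ.div_const 2), integral_div, integral_const_mul]
    _ = c * (∫ t, Q t) - (∫ t, Q t) ^ 2 / 4 := by
        rw [hQ.integral_mul_sq_eq_zero, integral_integral_Iic_mul hQ.continuous hQ.integrable]
        ring

end IsGroundState

theorem stmt_4_general (Q : ℝ → ℝ) (hQ : IsGroundState Q)
    (m₀ : ℝ) (hm₀ : m₀ = (1/4) * ∫ y : ℝ, Q y)
    (P : ℝ → ℝ) (hP : ContDiff ℝ 3 P)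
    (hPbd : ∃ M : ℝ, ∀ y : ℝ, |P y| ≤ M)
    (hP'bd : ∃ M : ℝ, ∀ y : ℝ, |deriv P y| ≤ M)
    (hP''bd : ∃ M : ℝ, ∀ y : ℝ, |deriv (deriv P) y| ≤ M)
    (hP''top : Tendsto (deriv (deriv P)) atTop (nhds 0))
    (hLP : ∀ y : ℝ,
      deriv (fun z : ℝ => -(deriv (deriv P) z) + P z - 5 * Q z ^ 4 * P z) y
        = (1/2) * Q y + y * deriv Q y)
    (hPtop : Tendsto P atTop (nhds 0)) :
    ∫ y : ℝ, P y * Q y ^ 5 = -m₀ ^ 2 := by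
  obtain ⟨M₀, hP₀⟩ := hPbd
  obtain ⟨M₁, hP₁⟩ := hP'bd
  obtain ⟨M₂, hP₂⟩ := hP''bd
  have hLderiv (y : ℝ) : HasDerivAt (fun z => -(deriv (deriv P) z) + P z - 5 * Q z ^ 4 * P z)
      (1 / 2 * Q y + y * deriv Q y) y := by
    have hQd := hQ.differentiable
    have hPd := hP.differentiable (by norm_num)
    have hP''d := ((contDiff_succ_iff_deriv (n := 2)).mp hP).2.2.differentiable_deriv_two
    rw [← hLP y]
    exact DifferentiableAt.hasDerivAt (by fun_prop)
  have hLtop :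
      Tendsto (fun z => -(deriv (deriv P) z) + P z - 5 * Q z ^ 4 * P z) atTop (𝓝 0) := by
    simpa using (hP''top.neg.add hPtop).sub (((hQ.tendsto_atTop.pow 4).const_mul 5).mul hPtop)
  have hRtop := hQ.tendsto_mul_sub_integral_Iic_atTop (2 * m₀)
  rw [show 2 * m₀ - (∫ t, Q t) / 2 = 0 by rw [hm₀]; ring] at hRtop
  have hL := eq_of_hasDerivAt_of_tendsto hLderiv (hQ.hasDerivAt_mul_sub_integral_Iic _) hLtop hRtop
  have h := hQ.integral_linearized_mul (hP.of_le (by norm_num)) hP₀ hP₁ hP₂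
  simp only [funext_iff] at hL
  simp only [hL] at h
  rw [hQ.integral_mul_sub_integral_Iic_mul, show ∫ t, Q t = 4 * m₀ by rw [hm₀]; ring] at h
  linarith

/-- If `(𝓛P)' = ΛQ` with `P → 2m₀` at `−∞` and `P → 0` at `+∞`, then
`∫ P Q⁵ = −m₀²`, where `m₀ = (1/4)∫ Q`. -/
theorem stmt_4 (Q : ℝ → ℝ) (hQ : IsGroundState Q)
    (m₀ : ℝ) (hm₀ : m₀ = (1/4) * ∫ y : ℝ, Q y)
    (P : ℝ → ℝ) (hP : ContDiff ℝ 3 P)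
    (hPbd : ∃ M : ℝ, ∀ y : ℝ, |P y| ≤ M)
    (hP'bd : ∃ M : ℝ, ∀ y : ℝ, |deriv P y| ≤ M)
    (hP''bd : ∃ M : ℝ, ∀ y : ℝ, |deriv (deriv P) y| ≤ M)
    (hP'top : Tendsto (deriv P) atTop (nhds 0))
    (hP'bot : Tendsto (deriv P) atBot (nhds 0))
    (hP''top : Tendsto (deriv (deriv P)) atTop (nhds 0))
    (hP''bot : Tendsto (deriv (deriv P)) atBot (nhds 0))
    (hP'int : Integrable (deriv P))
    (hP''int : Integrable (deriv (deriv P)))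
    (hLP : ∀ y : ℝ,
      deriv (fun z : ℝ => -(deriv (deriv P) z) + P z - 5 * Q z ^ 4 * P z) y
        = (1/2) * Q y + y * deriv Q y)
    (hPbot : Tendsto P atBot (nhds (2 * m₀)))
    (hPtop : Tendsto P atTop (nhds 0)) :
    ∫ y : ℝ, P y * Q y ^ 5 = -m₀ ^ 2 :=
  stmt_4_general Q hQ m₀ hm₀ P hP hPbd hP'bd hP''bd hP''top hLP hPtop
end

section
/- Let Q : ℝ → ℝ be a ground state and set m₀ = (1/4)∫_ℝ Q. Let P : ℝ → ℝ be three times continuously differentiable and bounded, with P', P'' bounded, tending to 0 at ±∞ and integrable, satisfying (−P'' + P − 5Q⁴P)' = (1/2)Q + yQ' on ℝ, lim_{y→−∞} P(y) = 2m₀, lim_{y→+∞} P(y) = 0, and ∫_ℝ P Q = m₀². Let A₁ : ℝ → ℝ be an odd, three times continuously differentiable bounded function with A₁', A₁'' bounded, tending to 0 at ±∞ and integrable, satisfying (−A₁'' + A₁ − 5Q⁴A₁)' = (1/2)Q + yQ' on ℝ, lim_{y→−∞} A₁(y) = m₀ and lim_{y→+∞} A₁(y) = −m₀. Then ∫_ℝ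 ( −(1/2)P(y) + y P'(y) + 20 (Q³ A₁ P)'(y) ) Q(y) dy = m₀². -/
open MeasureTheory Filter

/-!
Integrating by parts, `∫ y P' Q = -∫ P Q / 2 - ∫ P ΛQ` and `∫ 20 (Q³A₁P)' Q = -∫ 20 Q³Q' A₁ P`.
Since `A₁ ΛQ` is odd, `∫ A₁ ΛQ = 0`. As `(𝓛P)' = (𝓛A₁)' = ΛQ` and `𝓛` is symmetric,
`P ΛQ + A₁ ΛQ + 20 Q³Q' P A₁` is the derivative of the flux
`P 𝓛A₁ + A₁ 𝓛P + P'A₁' - P A₁ + 5 Q⁴ P A₁`, which tends to the product of the limits of `P` and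
`A₁`: to `0` at `+∞` and to `2 m₀²` at `-∞`.
Hence the left-hand side is `-∫ P Q + 2 m₀² = m₀²`.
-/

open Asymptotics Real Set Topology

noncomputable def linearizedOp (Q f : ℝ → ℝ) (y : ℝ) : ℝ :=
  -deriv (deriv f) y + f y - 5 * Q y ^ 4 * f y

noncomputable def scalingOp (f : ℝ → ℝ) (y : ℝ) : ℝ :=
  1 / 2 * f y + y * deriv f y

noncomputable def linearizedFlux (Q f g : ℝ → ℝ) (y : ℝ) : ℝ :=
  f y * linearizedOp Q g y + g y * linearizedOp Q f y + deriv f y * deriv g y - f y * g y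
    + 5 * Q y ^ 4 * f y * g y

/-- The first two terms are the boundary terms of the two integrations by parts. -/
noncomputable def integrandPrimitive (Q f g : ℝ → ℝ) (y : ℝ) : ℝ :=
  y * Q y * f y + 20 * Q y ^ 4 * g y * f y - linearizedFlux Q f g y

theorem isBigO_one_of_abs_le {α : Type*} {f : α → ℝ} (h : ∃ M, ∀ y, |f y| ≤ M) :
    f =O[⊤] fun _ => (1 : ℝ) :=
  isBigO_top.2 (h.imp fun _ hM y => by simpa using hM y)

theorem integrable_pow_mul_exp_neg_abs (n : ℕ) :
    Integrable fun y : ℝ => y ^ n * exp (-|y|) := by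
  refine (Continuous.locallyIntegrable (by fun_prop)
    ).integrable_of_isBigO_atTop_of_norm_isNegInvariant (Eventually.of_forall fun y => by simp)
    (isBigO_refl _ _) ⟨Ioi 0, Ioi_mem_atTop 0, ?_⟩
  refine (GammaIntegral_convergent (s := n + 1) (by positivity)).congr_fun
    (fun y hy => ?_) measurableSet_Ioi
  simp [abs_of_pos (mem_Ioi.mp hy), mul_comm]

theorem tendsto_pow_mul_exp_neg_abs_cocompact (n : ℕ) :
    Tendsto (fun y : ℝ => y ^ n * exp (-|y|)) (cocompact ℝ) (𝓝 0) := by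
  rw [tendsto_zero_iff_norm_tendsto_zero]
  convert (tendsto_pow_mul_exp_neg_atTop_nhds_zero n).comp (tendsto_norm_cocompact_atTop (E := ℝ))
    using 2
  simp

theorem Function.Odd.integral_eq_zero {G : Type*} [MeasurableSpace G] [AddGroup G]
    [MeasurableNeg G] {μ : Measure G} [μ.IsNegInvariant] {f : G → ℝ} (hf : f.Odd) :
    ∫ x, f x ∂μ = 0 := by
  have h := integral_neg_eq_self f μ
  simp only [hf.eq, integral_neg] at h
  linarith

theorem Function.Even.deriv {𝕜 F : Type*} [NontriviallyNormedField 𝕜] [NormedAddCommGroup F]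
    [NormedSpace 𝕜 F] {f : 𝕜 → F} (hf : f.Even) : (deriv f).Odd := by
  intro y
  have h : (fun x => f (-x)) = f := funext hf.eq
  simpa [h] using deriv_comp_neg (f := f) (x := -y)

theorem Function.Even.scalingOp {f : ℝ → ℝ} (hf : f.Even) : (scalingOp f).Even := by
  intro y
  simp only [_root_.scalingOp, hf.eq, hf.deriv.eq]
  ring

theorem differentiable_linearizedOp {Q f : ℝ → ℝ} (hQ : Differentiable ℝ Q)
    (hf : ContDiff ℝ 3 f) : Differentiable ℝ (linearizedOp Q f) := by
  unfold linearizedOp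
  fun_prop (disch := norm_num)

theorem tendsto_linearizedOp {Q f : ℝ → ℝ} {l : Filter ℝ} {a : ℝ} (hQ : Tendsto Q l (𝓝 0))
    (hf : Tendsto f l (𝓝 a)) (hf'' : Tendsto (deriv (deriv f)) l (𝓝 0)) :
    Tendsto (linearizedOp Q f) l (𝓝 a) := by
  have h : Tendsto (linearizedOp Q f) l (𝓝 (-0 + a - 5 * 0 ^ 4 * a)) :=
    (hf''.neg.add hf).sub (((hQ.pow 4).const_mul 5).mul hf)
  simpa using h

theorem tendsto_linearizedFlux {Q f g : ℝ → ℝ} {l : Filter ℝ} {a b : ℝ}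
    (hQ : Tendsto Q l (𝓝 0)) (hf : Tendsto f l (𝓝 a)) (hf' : Tendsto (deriv f) l (𝓝 0))
    (hf'' : Tendsto (deriv (deriv f)) l (𝓝 0)) (hg : Tendsto g l (𝓝 b))
    (hg' : Tendsto (deriv g) l (𝓝 0)) (hg'' : Tendsto (deriv (deriv g)) l (𝓝 0)) :
    Tendsto (linearizedFlux Q f g) l (𝓝 (a * b)) := by
  have h : Tendsto (linearizedFlux Q f g) l
      (𝓝 (a * b + b * a + 0 * 0 - a * b + 5 * 0 ^ 4 * a * b)) :=
    ((((hf.mul (tendsto_linearizedOp hQ hg hg'')).add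
      (hg.mul (tendsto_linearizedOp hQ hf hf''))).add (hf'.mul hg')).sub (hf.mul hg)).add
      ((((hQ.pow 4).const_mul 5).mul hf).mul hg)
  convert h using 2
  ring

theorem hasDerivAt_linearizedFlux {Q f g : ℝ → ℝ} {a b y : ℝ} (hQ : DifferentiableAt ℝ Q y)
    (hf : DifferentiableAt ℝ f y) (hf' : DifferentiableAt ℝ (deriv f) y)
    (hg : DifferentiableAt ℝ g y) (hg' : DifferentiableAt ℝ (deriv g) y)
    (hLf : HasDerivAt (linearizedOp Q f) a y) (hLg : HasDerivAt (linearizedOp Q g) b y) :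
    HasDerivAt (linearizedFlux Q f g)
      (f y * b + g y * a + 20 * Q y ^ 3 * deriv Q y * f y * g y) y := by
  have h : HasDerivAt (linearizedFlux Q f g) _ y :=
    ((((hf.hasDerivAt.mul hLg).add (hg.hasDerivAt.mul hLf)).add
      (hf'.hasDerivAt.mul hg'.hasDerivAt)).sub (hf.hasDerivAt.mul hg.hasDerivAt)).add
      ((((hQ.hasDerivAt.pow 4).const_mul 5).mul hf.hasDerivAt).mul hg.hasDerivAt)
  convert h using 1
  simp only [linearizedOp, Pi.pow_apply, Pi.mul_apply]
  push_cast
  ring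

theorem tendsto_integrandPrimitive {Q f g : ℝ → ℝ} {l : Filter ℝ} {a b : ℝ}
    (hQ : Tendsto Q l (𝓝 0)) (hyQ : Tendsto (fun y => y * Q y) l (𝓝 0))
    (hf : Tendsto f l (𝓝 a)) (hf' : Tendsto (deriv f) l (𝓝 0))
    (hf'' : Tendsto (deriv (deriv f)) l (𝓝 0)) (hg : Tendsto g l (𝓝 b))
    (hg' : Tendsto (deriv g) l (𝓝 0)) (hg'' : Tendsto (deriv (deriv g)) l (𝓝 0)) :
    Tendsto (integrandPrimitive Q f g) l (𝓝 (-(a * b))) := by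
  have h : Tendsto (integrandPrimitive Q f g) l (𝓝 (0 * a + 20 * 0 ^ 4 * b * a - a * b)) :=
    ((hyQ.mul hf).add ((((hQ.pow 4).const_mul 20).mul hg).mul hf)).sub
      (tendsto_linearizedFlux hQ hf hf' hf'' hg hg' hg'')
  simpa using h

theorem hasDerivAt_integrandPrimitive {Q f g : ℝ → ℝ} {y : ℝ} (hQ : DifferentiableAt ℝ Q y)
    (hf : DifferentiableAt ℝ f y) (hf' : DifferentiableAt ℝ (deriv f) y)
    (hg : DifferentiableAt ℝ g y) (hg' : DifferentiableAt ℝ (deriv g) y)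
    (hLf : HasDerivAt (linearizedOp Q f) (scalingOp Q y) y)
    (hLg : HasDerivAt (linearizedOp Q g) (scalingOp Q y) y) :
    HasDerivAt (integrandPrimitive Q f g)
      ((-(1/2) * f y + y * deriv f y + 20 * deriv (fun z => Q z ^ 3 * g z * f z) y) * Q y
        + f y * Q y - g y * scalingOp Q y) y := by
  have hcube : HasDerivAt (fun z => Q z ^ 3 * g z * f z) _ y :=
    ((hQ.hasDerivAt.pow 3).mul hg.hasDerivAt).mul hf.hasDerivAt
  have h : HasDerivAt (integrandPrimitive Q f g) _ y :=
    ((((hasDerivAt_id y).mul hQ.hasDerivAt).mul hf.hasDerivAt).add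
      ((((hQ.hasDerivAt.pow 4).const_mul 20).mul hg.hasDerivAt).mul hf.hasDerivAt)).sub
      (hasDerivAt_linearizedFlux hQ hf hf' hg hg' hLf hLg)
  convert h using 1
  rw [hcube.deriv]
  simp only [scalingOp, Pi.pow_apply, Pi.mul_apply, id]
  push_cast
  ring

namespace IsGroundState

variable {Q : ℝ → ℝ}

theorem isBigO_iteratedDeriv (hQ : IsGroundState Q) (k : ℕ) :
    iteratedDeriv k Q =O[⊤] fun y => exp (-|y|) := by
  obtain ⟨C, -, hC⟩ := hQ.2.2.2.2 k
  exact isBigO_top.2 ⟨C, fun y => by simpa using hC y⟩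

theorem isBigO_one_iteratedDeriv (hQ : IsGroundState Q) (k : ℕ) :
    iteratedDeriv k Q =O[⊤] fun _ => (1 : ℝ) :=
  (hQ.isBigO_iteratedDeriv k).trans <| isBigO_top.2 ⟨1, fun y => by simp⟩

theorem tendsto_cocompact (hQ : IsGroundState Q) (n k : ℕ) :
    Tendsto (fun y => y ^ n * iteratedDeriv k Q y) (cocompact ℝ) (𝓝 0) :=
  (((isBigO_refl _ _).mul (hQ.isBigO_iteratedDeriv k)).mono le_top).trans_tendsto
    (tendsto_pow_mul_exp_neg_abs_cocompact n)

theorem integrable_bdd_mul (hQ : IsGroundState Q) (n k : ℕ) {u : ℝ → ℝ}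
    (hu : AEStronglyMeasurable u) (hb : u =O[⊤] fun _ => (1 : ℝ)) :
    Integrable fun y => u y * (y ^ n * iteratedDeriv k Q y) := by
  refine (hb.mul ((isBigO_refl _ _).mul (hQ.isBigO_iteratedDeriv k))).integrable
    (hu.mul ?_) (by simpa using integrable_pow_mul_exp_neg_abs n)
  exact ((continuous_pow n).mul
    (hQ.1.continuous_iteratedDeriv k (mod_cast le_top))).aestronglyMeasurable

theorem integrable_bdd_mul_scalingOp (hQ : IsGroundState Q) {u : ℝ → ℝ}
    (hu : AEStronglyMeasurable u) (hb : u =O[⊤] fun _ => (1 : ℝ)) :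
    Integrable fun y => u y * scalingOp Q y := by
  refine (((hQ.integrable_bdd_mul 0 0 hu hb).const_mul (1 / 2)).add
    (hQ.integrable_bdd_mul 1 1 hu hb)).congr (Eventually.of_forall fun y => ?_)
  simp only [Pi.add_apply, scalingOp, iteratedDeriv_zero, iteratedDeriv_one]
  ring

theorem isBigO_one_deriv_cube_mul (hQ : IsGroundState Q) {f g : ℝ → ℝ}
    (hf : Differentiable ℝ f) (hg : Differentiable ℝ g)
    (hfb : f =O[⊤] fun _ => (1 : ℝ)) (hf'b : deriv f =O[⊤] fun _ => (1 : ℝ))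
    (hgb : g =O[⊤] fun _ => (1 : ℝ)) (hg'b : deriv g =O[⊤] fun _ => (1 : ℝ)) :
    deriv (fun z => Q z ^ 3 * g z * f z) =O[⊤] fun _ => (1 : ℝ) := by
  have hQd : Differentiable ℝ Q := hQ.1.differentiable (by simp)
  have hderiv : deriv (fun z => Q z ^ 3 * g z * f z) = fun y =>
      3 * Q y ^ 2 * deriv Q y * g y * f y + Q y ^ 3 * deriv g y * f y
        + Q y ^ 3 * g y * deriv f y := by
    ext y
    have h : HasDerivAt (fun z => Q z ^ 3 * g z * f z) _ y :=
      (((hQd y).hasDerivAt.pow 3).mul (hg y).hasDerivAt).mul (hf y).hasDerivAt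
    rw [h.deriv]
    simp only [Pi.pow_apply, Pi.mul_apply]
    push_cast
    ring
  have hQb := hQ.isBigO_one_iteratedDeriv 0
  have hQ'b := hQ.isBigO_one_iteratedDeriv 1
  simp only [iteratedDeriv_zero, iteratedDeriv_one] at hQb hQ'b
  rw [hderiv]
  simpa using ((((((hQb.pow 2).const_mul_left 3).mul hQ'b).mul hgb).mul hfb).add
    (((hQb.pow 3).mul hg'b).mul hfb)).add (((hQb.pow 3).mul hgb).mul hf'b)

theorem integrable_integrand (hQ : IsGroundState Q) {f g : ℝ → ℝ}
    (hf : Differentiable ℝ f) (hg : Differentiable ℝ g)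
    (hfb : f =O[⊤] fun _ => (1 : ℝ)) (hf'b : deriv f =O[⊤] fun _ => (1 : ℝ))
    (hgb : g =O[⊤] fun _ => (1 : ℝ)) (hg'b : deriv g =O[⊤] fun _ => (1 : ℝ)) :
    Integrable fun y =>
      (-(1/2) * f y + y * deriv f y + 20 * deriv (fun z => Q z ^ 3 * g z * f z) y) * Q y := by
  have hcube := hQ.isBigO_one_deriv_cube_mul hf hg hfb hf'b hgb hg'b
  have h₀ := hQ.integrable_bdd_mul 0 0
    (u := fun y => -(1/2) * f y + 20 * deriv (fun z => Q z ^ 3 * g z * f z) y)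
    ((hf.continuous.aestronglyMeasurable.const_mul _).add
      ((measurable_deriv _).aestronglyMeasurable.const_mul _))
    ((hfb.const_mul_left _).add (hcube.const_mul_left _))
  have h₁ := hQ.integrable_bdd_mul 1 0 (u := deriv f) (by fun_prop) hf'b
  refine (h₀.add h₁).congr (Eventually.of_forall fun y => ?_)
  simp only [Pi.add_apply, iteratedDeriv_zero]
  ring

end IsGroundState

theorem stmt_5_general (Q : ℝ → ℝ) (hQ : IsGroundState Q)
    (m₀ : ℝ)
    (P : ℝ → ℝ) (hP : ContDiff ℝ 3 P)
    (hPbd : ∃ M : ℝ, ∀ y : ℝ, |P y| ≤ M)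
    (hP'bd : ∃ M : ℝ, ∀ y : ℝ, |deriv P y| ≤ M)
    (hP'top : Tendsto (deriv P) atTop (nhds 0))
    (hP'bot : Tendsto (deriv P) atBot (nhds 0))
    (hP''top : Tendsto (deriv (deriv P)) atTop (nhds 0))
    (hP''bot : Tendsto (deriv (deriv P)) atBot (nhds 0))
    (hLP : ∀ y : ℝ,
      deriv (fun z : ℝ => -(deriv (deriv P) z) + P z - 5 * Q z ^ 4 * P z) y
        = (1/2) * Q y + y * deriv Q y)
    (hPbot : Tendsto P atBot (nhds (2 * m₀)))
    (hPtop : Tendsto P atTop (nhds 0))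
    (hPQ : ∫ y : ℝ, P y * Q y = m₀ ^ 2)
    (A₁ : ℝ → ℝ) (hA₁odd : ∀ y : ℝ, A₁ (-y) = -A₁ y) (hA₁ : ContDiff ℝ 3 A₁)
    (hA₁bd : ∃ M : ℝ, ∀ y : ℝ, |A₁ y| ≤ M)
    (hA₁'bd : ∃ M : ℝ, ∀ y : ℝ, |deriv A₁ y| ≤ M)
    (hA₁'top : Tendsto (deriv A₁) atTop (nhds 0))
    (hA₁'bot : Tendsto (deriv A₁) atBot (nhds 0))
    (hA₁''top : Tendsto (deriv (deriv A₁)) atTop (nhds 0))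
    (hA₁''bot : Tendsto (deriv (deriv A₁)) atBot (nhds 0))
    (hLA₁ : ∀ y : ℝ,
      deriv (fun z : ℝ => -(deriv (deriv A₁) z) + A₁ z - 5 * Q z ^ 4 * A₁ z) y
        = (1/2) * Q y + y * deriv Q y)
    (hA₁bot : Tendsto A₁ atBot (nhds m₀))
    (hA₁top : Tendsto A₁ atTop (nhds (-m₀))) :
    ∫ y : ℝ,
      (-(1/2) * P y + y * deriv P y
        + 20 * deriv (fun z : ℝ => Q z ^ 3 * A₁ z * P z) y) * Q y = m₀ ^ 2 := by
  have hQd : Differentiable ℝ Q := hQ.1.differentiable (by simp)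
  have hPd : Differentiable ℝ P := hP.differentiable (by norm_num)
  have hAd : Differentiable ℝ A₁ := hA₁.differentiable (by norm_num)
  have hE (y : ℝ) := hasDerivAt_integrandPrimitive (hQd y) (hPd y)
    ((hP.of_le (by norm_num)).differentiable_deriv_two y) (hAd y)
    ((hA₁.of_le (by norm_num)).differentiable_deriv_two y)
    ((differentiable_linearizedOp hQd hP y).hasDerivAt.congr_deriv (hLP y))
    ((differentiable_linearizedOp hQd hA₁ y).hasDerivAt.congr_deriv (hLA₁ y))
  have hint := hQ.integrable_integrand hPd hAd (isBigO_one_of_abs_le hPbd)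
    (isBigO_one_of_abs_le hP'bd) (isBigO_one_of_abs_le hA₁bd) (isBigO_one_of_abs_le hA₁'bd)
  have hPQint : Integrable fun y => P y * Q y := by
    simpa using hQ.integrable_bdd_mul 0 0 hPd.continuous.aestronglyMeasurable
      (isBigO_one_of_abs_le hPbd)
  have hAint := hQ.integrable_bdd_mul_scalingOp hAd.continuous.aestronglyMeasurable
    (isBigO_one_of_abs_le hA₁bd)
  have hQ0 : Tendsto Q (cocompact ℝ) (𝓝 0) := by simpa using hQ.tendsto_cocompact 0 0
  have hyQ0 : Tendsto (fun y => y * Q y) (cocompact ℝ) (𝓝 0) := by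
    simpa using hQ.tendsto_cocompact 1 0
  have hFTC := integral_of_hasDerivAt_of_tendsto hE ((hint.fun_add hPQint).sub hAint)
    (tendsto_integrandPrimitive (hQ0.mono_left atBot_le_cocompact)
      (hyQ0.mono_left atBot_le_cocompact) hPbot hP'bot hP''bot hA₁bot hA₁'bot hA₁''bot)
    (tendsto_integrandPrimitive (hQ0.mono_left atTop_le_cocompact)
      (hyQ0.mono_left atTop_le_cocompact) hPtop hP'top hP''top hA₁top hA₁'top hA₁''top)
  have hodd : ∫ y, A₁ y * scalingOp Q y = 0 :=
    (Function.Odd.mul_even hA₁odd (Function.Even.scalingOp hQ.2.2.1)).integral_eq_zero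
  rw [integral_sub (hint.fun_add hPQint) hAint, integral_add hint hPQint, hPQ, hodd] at hFTC
  linarith

/-- The identity `( −P/2 + yP' + 20(Q³A₁P)', Q ) = m₀²` (Lemma on `P` and `A₁`). -/
theorem stmt_5 (Q : ℝ → ℝ) (hQ : IsGroundState Q)
    (m₀ : ℝ) (hm₀ : m₀ = (1/4) * ∫ y : ℝ, Q y)
    (P : ℝ → ℝ) (hP : ContDiff ℝ 3 P)
    (hPbd : ∃ M : ℝ, ∀ y : ℝ, |P y| ≤ M)
    (hP'bd : ∃ M : ℝ, ∀ y : ℝ, |deriv P y| ≤ M)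
    (hP''bd : ∃ M : ℝ, ∀ y : ℝ, |deriv (deriv P) y| ≤ M)
    (hP'top : Tendsto (deriv P) atTop (nhds 0))
    (hP'bot : Tendsto (deriv P) atBot (nhds 0))
    (hP''top : Tendsto (deriv (deriv P)) atTop (nhds 0))
    (hP''bot : Tendsto (deriv (deriv P)) atBot (nhds 0))
    (hP'int : Integrable (deriv P))
    (hP''int : Integrable (deriv (deriv P)))
    (hLP : ∀ y : ℝ,
      deriv (fun z : ℝ => -(deriv (deriv P) z) + P z - 5 * Q z ^ 4 * P z) y
        = (1/2) * Q y + y * deriv Q y)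
    (hPbot : Tendsto P atBot (nhds (2 * m₀)))
    (hPtop : Tendsto P atTop (nhds 0))
    (hPQ : ∫ y : ℝ, P y * Q y = m₀ ^ 2)
    (A₁ : ℝ → ℝ) (hA₁odd : ∀ y : ℝ, A₁ (-y) = -A₁ y) (hA₁ : ContDiff ℝ 3 A₁)
    (hA₁bd : ∃ M : ℝ, ∀ y : ℝ, |A₁ y| ≤ M)
    (hA₁'bd : ∃ M : ℝ, ∀ y : ℝ, |deriv A₁ y| ≤ M)
    (hA₁''bd : ∃ M : ℝ, ∀ y : ℝ, |deriv (deriv A₁) y| ≤ M)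
    (hA₁'top : Tendsto (deriv A₁) atTop (nhds 0))
    (hA₁'bot : Tendsto (deriv A₁) atBot (nhds 0))
    (hA₁''top : Tendsto (deriv (deriv A₁)) atTop (nhds 0))
    (hA₁''bot : Tendsto (deriv (deriv A₁)) atBot (nhds 0))
    (hA₁'int : Integrable (deriv A₁))
    (hA₁''int : Integrable (deriv (deriv A₁)))
    (hLA₁ : ∀ y : ℝ,
      deriv (fun z : ℝ => -(deriv (deriv A₁) z) + A₁ z - 5 * Q z ^ 4 * A₁ z) y
        = (1/2) * Q y + y * deriv Q y)
    (hA₁bot : Tendsto A₁ atBot (nhds m₀))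
    (hA₁top : Tendsto A₁ atTop (nhds (-m₀))) :
    ∫ y : ℝ,
      (-(1/2) * P y + y * deriv P y
        + 20 * deriv (fun z : ℝ => Q z ^ 3 * A₁ z * P z) y) * Q y = m₀ ^ 2 :=
  stmt_5_general Q hQ m₀ P hP hPbd hP'bd hP'top hP'bot hP''top hP''bot hLP hPbot hPtop hPQ A₁ hA₁odd
    hA₁ hA₁bd hA₁'bd hA₁'top hA₁'bot hA₁''top hA₁''bot hLA₁ hA₁bot hA₁top
end

section
/- Let α > 1, β = 1/(4α+3), δ ∈ (0,1], and m₀ > 0. Let χ_R : ℝ → [0,1] be a smooth function with χ_R ≡ 1 on (−∞, 1/2] and χ_R ≡ 0 on [1, ∞), and let χ : ℝ → [0,1] be a smooth function with χ ≡ 0 on (−∞,1] and χ ≡ 1 on [2,∞). Define Θ₀(x) = x^{α−1/2} χ_R(x/δ) for x > 0 and Θ₀(x) = 0 for x ≤ 0; Θ₁ = −Θ₀''' − m₀⁴(Θ₀⁵)' on (0,∞); and Θ_♯(t,x) = Θ₀(x) + t χ(t^{−7β/6} x) Θ₁(x) for t ∈ (0,1], x > 0. Then for every j ∈ {0,1,2,3,4,5,6}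 there exists a constant C > 0 (depending on j, α, δ, m₀ and the cutoffs χ, χ_R) such that: (a) |Θ₁^{(j)}(x)| ≤ C x^{α−7/2−j} for all x ∈ (0,δ]; (b) for all t ∈ (0,1] and all x ∈ (0,δ] with x ≥ 2 t^{7β/6}, one has |∂ₓ^j Θ_♯(t,x)| ≤ C x^{α−1/2−j} and |∂ₓ^j ∂ₜ Θ_♯(t,x)| ≤ C x^{α−7/2−j}. -/
/-!
On `(0, ∞)`, `Θ₀ = x ^ (α - 1/2) χR (x / δ)`, and everything built from it by sums, products and
derivatives is a polynomial in powers `x ^ p` and rescaled derivatives `χR⁽ᵐ⁾ (x / δ)`. Each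
derivative lowers the least power by one, and a polynomial of least power `q` is `O(x ^ q)` on
`(0, δ]` because the `χR⁽ᵐ⁾` are bounded there; as `α ≥ 0`, the quintic term does not lower the
order, so `Θ₁⁽ʲ⁾ = O(x ^ (α - 7/2 - j))`.

Where `x > 2 t ^ (7β/6)` the cutoff `χ(t^(-7β/6) x)` is identically one near `(t, x)`, so there
`Θ_♯ = Θ₀ + t Θ₁` and `∂ₜΘ_♯ = Θ₁`; by continuity of the derivatives the same `x`-derivatives
are obtained on the edge `x = 2 t ^ (7β/6)`. Finally `β ≤ 2/7` forces `t ≤ x³` in this region,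
so `t Θ₁⁽ʲ⁾` is dominated by `x ^ (α - 1/2 - j)`.
-/

open Set Filter Topology
open scoped ContDiff

/-- `IsCutoffPoly φ δ q f`: on `(0, ∞)`, `f` is a polynomial in the functions `z ^ p` and
`φ⁽ᵐ⁾ (z / δ)`, each of its monomials having total power at least `q`. -/
inductive IsCutoffPoly (φ : ℝ → ℝ) (δ : ℝ) : ℝ → (ℝ → ℝ) → Prop
  | const (c : ℝ) : IsCutoffPoly φ δ 0 fun _ => c
  | rpow (q : ℝ) : IsCutoffPoly φ δ q fun z => z ^ q
  | cutoff (m : ℕ) : IsCutoffPoly φ δ 0 fun z => iteratedDeriv m φ (z / δ)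
  | add {q : ℝ} {f g : ℝ → ℝ} :
      IsCutoffPoly φ δ q f → IsCutoffPoly φ δ q g → IsCutoffPoly φ δ q fun z => f z + g z
  | mul {q₁ q₂ : ℝ} {f g : ℝ → ℝ} :
      IsCutoffPoly φ δ q₁ f → IsCutoffPoly φ δ q₂ g → IsCutoffPoly φ δ (q₁ + q₂) fun z => f z * g z
  | mono {q' q : ℝ} {f : ℝ → ℝ} : q' ≤ q → IsCutoffPoly φ δ q f → IsCutoffPoly φ δ q' f
  | congr {q : ℝ} {f g : ℝ → ℝ} : EqOn f g (Ioi 0) → IsCutoffPoly φ δ q f → IsCutoffPoly φ δ q g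

namespace IsCutoffPoly

variable {φ : ℝ → ℝ} {δ q : ℝ} {f : ℝ → ℝ}

theorem const_mul (c : ℝ) (h : IsCutoffPoly φ δ q f) : IsCutoffPoly φ δ q fun z => c * f z :=
  ((const c).mul h).mono (zero_add q).ge

theorem pow (h : IsCutoffPoly φ δ q f) (n : ℕ) : IsCutoffPoly φ δ (n * q) fun z => f z ^ n := by
  induction n with
  | zero => simpa using const 1
  | succ n ih => simpa [pow_succ, add_mul] using ih.mul h

theorem contDiffOn (hφ : ContDiff ℝ ∞ φ) (h : IsCutoffPoly φ δ q f) :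
    ContDiffOn ℝ ∞ f (Ioi 0) := by
  induction h with
  | const c => exact contDiffOn_const
  | rpow q => exact fun x hx => (Real.contDiffAt_rpow_const_of_ne (ne_of_gt hx)).contDiffWithinAt
  | cutoff m =>
    rw [iteratedDeriv_eq_iterate]
    exact ((hφ.iterate_deriv m).comp (contDiff_id.div_const δ)).contDiffOn
  | add _ _ ihf ihg => exact ihf.add ihg
  | mul _ _ ihf ihg => exact ihf.mul ihg
  | mono _ _ ih => exact ih
  | congr hfg _ ih => exact ih.congr fun x hx => (hfg hx).symm

theorem exists_hasDerivAt (hφ : ContDiff ℝ ∞ φ) (h : IsCutoffPoly φ δ q f) :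
    ∃ g, IsCutoffPoly φ δ (q - 1) g ∧ ∀ x ∈ Ioi (0 : ℝ), HasDerivAt f (g x) x := by
  induction h with
  | const c => exact ⟨fun _ => 0, (const 0).mono (by norm_num), fun x _ => hasDerivAt_const x c⟩
  | rpow q =>
    exact ⟨fun z => q * z ^ (q - 1), ((rpow (q - 1)).const_mul q),
      fun x hx => Real.hasDerivAt_rpow_const (Or.inl (ne_of_gt hx))⟩
  | cutoff m =>
    refine ⟨fun z => δ⁻¹ * iteratedDeriv (m + 1) φ (z / δ),
      ((cutoff (m + 1)).const_mul δ⁻¹).mono (by norm_num), fun x _ => ?_⟩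
    have hφm : HasDerivAt (iteratedDeriv m φ) (iteratedDeriv (m + 1) φ (x / δ)) (x / δ) := by
      rw [iteratedDeriv_succ]
      exact ((hφ.differentiable_iteratedDeriv m (mod_cast ENat.natCast_lt_top m)) _).hasDerivAt
    have := hφm.comp x ((hasDerivAt_id x).div_const δ)
    rwa [mul_comm, one_div] at this
  | add _ _ ihf ihg =>
    obtain ⟨f', hf', hf⟩ := ihf
    obtain ⟨g', hg', hg⟩ := ihg
    exact ⟨fun z => f' z + g' z, hf'.add hg', fun x hx => (hf x hx).add (hg x hx)⟩
  | @mul q₁ q₂ f g hf₀ hg₀ ihf ihg =>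
    obtain ⟨f', hf', hf⟩ := ihf
    obtain ⟨g', hg', hg⟩ := ihg
    refine ⟨fun z => f' z * g z + f z * g' z, ?_, fun x hx => (hf x hx).mul (hg x hx)⟩
    exact ((hf'.mul hg₀).mono (by linarith)).add ((hf₀.mul hg').mono (by linarith))
  | mono hle _ ih =>
    obtain ⟨f', hf', hf⟩ := ih
    exact ⟨f', hf'.mono (by linarith), hf⟩
  | congr hfg _ ih =>
    obtain ⟨f', hf', hf⟩ := ih
    exact ⟨f', hf', fun x hx => (hf x hx).congr_of_eventuallyEq
      (eventuallyEq_of_mem (isOpen_Ioi.mem_nhds hx) hfg).symm⟩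

theorem deriv (hφ : ContDiff ℝ ∞ φ) (h : IsCutoffPoly φ δ q f) :
    IsCutoffPoly φ δ (q - 1) (deriv f) := by
  obtain ⟨g, hg, hf⟩ := h.exists_hasDerivAt hφ
  exact hg.congr fun x hx => (hf x hx).deriv.symm

theorem iteratedDeriv (hφ : ContDiff ℝ ∞ φ) (h : IsCutoffPoly φ δ q f) (k : ℕ) :
    IsCutoffPoly φ δ (q - k) (iteratedDeriv k f) := by
  induction k with
  | zero => simpa using h
  | succ k ih => simpa [iteratedDeriv_succ, sub_sub] using ih.deriv hφ

theorem exists_abs_le (hφ : ContDiff ℝ ∞ φ) (h : IsCutoffPoly φ δ q f) {R : ℝ} (hR : 0 < R) :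
    ∃ C > 0, ∀ x ∈ Ioc (0 : ℝ) R, |f x| ≤ C * x ^ q := by
  induction h with
  | const c =>
    exact ⟨|c| + 1, by positivity, fun x _ => by rw [Real.rpow_zero, mul_one]; linarith⟩
  | rpow q => exact ⟨1, one_pos, fun x hx => by simp [abs_of_nonneg (Real.rpow_nonneg hx.1.le q)]⟩
  | cutoff m =>
    obtain ⟨M, hM⟩ := (isCompact_Icc (a := 0) (b := R)).exists_bound_of_continuousOn
      ((hφ.continuous_iteratedDeriv m (mod_cast le_top)).comp
        (continuous_id.div_const δ)).continuousOn
    exact ⟨max M 1, by positivity, fun x hx => by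
      simpa using (hM x (Ioc_subset_Icc_self hx)).trans (le_max_left M 1)⟩
  | @add q f g _ _ ihf ihg =>
    obtain ⟨C₁, hC₁, hf⟩ := ihf
    obtain ⟨C₂, hC₂, hg⟩ := ihg
    refine ⟨C₁ + C₂, by positivity, fun x hx => ?_⟩
    calc |f x + g x| ≤ |f x| + |g x| := abs_add_le _ _
      _ ≤ C₁ * x ^ q + C₂ * x ^ q := add_le_add (hf x hx) (hg x hx)
      _ = (C₁ + C₂) * x ^ q := by ring
  | @mul q₁ q₂ f g _ _ ihf ihg =>
    obtain ⟨C₁, hC₁, hf⟩ := ihf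
    obtain ⟨C₂, hC₂, hg⟩ := ihg
    refine ⟨C₁ * C₂, by positivity, fun x hx => ?_⟩
    calc |f x * g x| = |f x| * |g x| := abs_mul _ _
      _ ≤ (C₁ * x ^ q₁) * (C₂ * x ^ q₂) :=
        mul_le_mul (hf x hx) (hg x hx) (abs_nonneg _) (by have := hx.1; positivity)
      _ = C₁ * C₂ * x ^ (q₁ + q₂) := by rw [Real.rpow_add hx.1]; ring
  | @mono q' q f hle _ ih =>
    obtain ⟨C, hC, hf⟩ := ih
    refine ⟨C * R ^ (q - q'), by positivity, fun x hx => ?_⟩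
    have hx₀ := hx.1
    calc |f x| ≤ C * x ^ q := hf x hx
      _ = C * (x ^ (q - q') * x ^ q') := by rw [← Real.rpow_add hx₀, sub_add_cancel]
      _ ≤ C * (R ^ (q - q') * x ^ q') := by gcongr; exact hx.2
      _ = C * R ^ (q - q') * x ^ q' := by ring
  | @congr q f g hfg _ ih =>
    obtain ⟨C, hC, hf⟩ := ih
    exact ⟨C, hC, fun x hx => hfg hx.1 ▸ hf x hx⟩

theorem neg_iteratedDeriv_three_sub_mul_deriv_pow_five (hφ : ContDiff ℝ ∞ φ)
    (h : IsCutoffPoly φ δ q f) (hq : -1 / 2 ≤ q) (m : ℝ) :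
    IsCutoffPoly φ δ (q - 3)
      fun x => -(_root_.iteratedDeriv 3 f x) - m * _root_.deriv (fun z => f z ^ 5) x :=
  ((((h.iteratedDeriv hφ 3).const_mul (-1)).mono (by push_cast; linarith)).add
    ((((h.pow 5).deriv hφ).const_mul (-m)).mono (by push_cast; linarith))).congr
    fun x _ => by ring

end IsCutoffPoly

theorem iteratedDeriv_eqOn_Ici_of_eqOn_Ioi {f g : ℝ → ℝ} {U : Set ℝ} {a : ℝ} {n : ℕ}
    (hU : IsOpen U) (haU : Ici a ⊆ U) (hf : ContDiffOn ℝ n f U) (hg : ContDiffOn ℝ n g U)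
    (hfg : EqOn f g (Ioi a)) : EqOn (iteratedDeriv n f) (iteratedDeriv n g) (Ici a) := by
  have hcont {h : ℝ → ℝ} (hh : ContDiffOn ℝ n h U) : ContinuousOn (iteratedDeriv n h) (Ici a) :=
    ((hh.continuousOn_iteratedDerivWithin le_rfl hU.uniqueDiffOn).congr
      (iteratedDerivWithin_of_isOpen hU).symm).mono haU
  refine EqOn.of_subset_closure (fun x hx => ?_) (hcont hf) (hcont hg) Ioi_subset_Ici_self
    (closure_Ioi a).ge
  exact (eventuallyEq_of_mem (isOpen_Ioi.mem_nhds hx) hfg).iteratedDeriv_eq n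

theorem hasDerivAt_mul_comp_rpow_neg_mul {χ : ℝ → ℝ} (hχ : Differentiable ℝ χ) {t : ℝ}
    (ht : 0 < t) (c z : ℝ) :
    HasDerivAt (fun s => s * χ (s ^ (-c) * z))
      (χ (t ^ (-c) * z) - c * (t ^ (-c) * z) * deriv χ (t ^ (-c) * z)) t := by
  have hin : HasDerivAt (fun s => s ^ (-c) * z) (-c * t ^ (-c - 1) * z) t :=
    (Real.hasDerivAt_rpow_const (Or.inl ht.ne')).mul_const z
  refine ((hasDerivAt_id t).mul ((hχ _).hasDerivAt.comp t hin)).congr_deriv ?_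
  rw [Real.rpow_sub ht, Real.rpow_one, Function.comp_apply, id]
  field_simp
  ring

theorem le_pow_three_of_rpow_le {t e x : ℝ} (ht : t ∈ Ioc (0 : ℝ) 1) (he : 3 * e ≤ 1)
    (hx : t ^ e ≤ x) : t ≤ x ^ 3 :=
  calc t = t ^ (1 : ℝ) := (Real.rpow_one t).symm
    _ ≤ t ^ (e * (3 : ℕ)) := Real.rpow_le_rpow_of_exponent_ge ht.1 ht.2 (by push_cast; linarith)
    _ = (t ^ e) ^ 3 := Real.rpow_mul_natCast ht.1.le e 3
    _ ≤ x ^ 3 := pow_le_pow_left₀ (Real.rpow_nonneg ht.1.le e) hx 3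

theorem abs_add_mul_le_of_le_pow_three {a b t x p q C₀ C₁ : ℝ} (hx : 0 < x) (ht : 0 < t)
    (htx : t ≤ x ^ 3) (hpq : q + 3 = p) (ha : |a| ≤ C₀ * x ^ p) (hb : |b| ≤ C₁ * x ^ q) :
    |a + t * b| ≤ (C₀ + C₁) * x ^ p :=
  calc |a + t * b| ≤ |a| + t * |b| := by
        simpa [abs_mul, abs_of_pos ht] using abs_add_le a (t * b)
    _ ≤ C₀ * x ^ p + x ^ 3 * (C₁ * x ^ q) := by gcongr
    _ = (C₀ + C₁) * x ^ p := by
        rw [mul_left_comm, ← Real.rpow_natCast, ← Real.rpow_add hx, Nat.cast_ofNat, add_comm 3 q,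
          hpq]
        ring

theorem two_lt_rpow_neg_mul {t c z : ℝ} (ht : 0 < t) (hz : 2 * t ^ c < z) :
    2 < t ^ (-c) * z := by
  rw [Real.rpow_neg ht.le, inv_mul_eq_div, lt_div_iff₀ (Real.rpow_pos_of_pos ht c)]
  exact hz

section ApproximateSolution

variable {χ P Q : ℝ → ℝ} {F : ℝ → ℝ → ℝ} {c t x : ℝ}

theorem iteratedDeriv_eq_of_two_mul_rpow_le (hχ : ContDiff ℝ ∞ χ)
    (hχ₁ : ∀ y, 2 ≤ y → χ y = 1) (hP : ContDiffOn ℝ ∞ P (Ioi 0)) (hQ : ContDiffOn ℝ ∞ Q (Ioi 0))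
    (hF : ∀ s, 0 < s → ∀ z, 0 < z → F s z = P z + s * χ (s ^ (-c) * z) * Q z)
    (n : ℕ) (ht : 0 < t) (hx : 2 * t ^ c ≤ x) :
    iteratedDeriv n (F t) x = iteratedDeriv n P x + t * iteratedDeriv n Q x := by
  have hn : (n : WithTop ℕ∞) ≤ ∞ := mod_cast le_top
  have hU : Ici (2 * t ^ c) ⊆ Ioi 0 := Ici_subset_Ioi.2 (by positivity)
  have hFt : ContDiffOn ℝ ∞ (F t) (Ioi 0) :=
    (hP.add (contDiffOn_const.mul
      ((hχ.comp (contDiff_const.mul contDiff_id)).contDiffOn.mul hQ))).congr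
      fun z hz => by rw [hF t ht z hz, mul_assoc]; rfl
  have hPQ : ContDiffOn ℝ ∞ (fun z => P z + t * Q z) (Ioi 0) := hP.add (contDiffOn_const.mul hQ)
  have hx₀ : x ∈ Ioi 0 := hU hx
  rw [iteratedDeriv_eqOn_Ici_of_eqOn_Ioi isOpen_Ioi hU (hFt.of_le hn) (hPQ.of_le hn)
      (fun z hz => by
        rw [hF t ht z (hU (Ioi_subset_Ici_self hz)), hχ₁ _ (two_lt_rpow_neg_mul ht hz).le,
          mul_one]) hx,
    iteratedDeriv_fun_add ((hP.of_le hn).contDiffAt (isOpen_Ioi.mem_nhds hx₀))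
      ((contDiffOn_const.mul (hQ.of_le hn)).contDiffAt (isOpen_Ioi.mem_nhds hx₀)),
    iteratedDeriv_const_mul_field]

theorem iteratedDeriv_deriv_eq_of_two_mul_rpow_le (hχ : ContDiff ℝ ∞ χ)
    (hχ₁ : ∀ y, 2 ≤ y → χ y = 1) (hQ : ContDiffOn ℝ ∞ Q (Ioi 0))
    (hF : ∀ s, 0 < s → ∀ z, 0 < z → F s z = P z + s * χ (s ^ (-c) * z) * Q z)
    (n : ℕ) (ht : 0 < t) (hx : 2 * t ^ c ≤ x) :
    iteratedDeriv n (fun z => deriv (fun s => F s z) t) x = iteratedDeriv n Q x := by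
  have hn : (n : WithTop ℕ∞) ≤ ∞ := mod_cast le_top
  have hU : Ici (2 * t ^ c) ⊆ Ioi 0 := Ici_subset_Ioi.2 (by positivity)
  set η : ℝ → ℝ := fun y => χ y - c * y * deriv χ y
  have hη : ContDiff ℝ ∞ η :=
    hχ.sub ((contDiff_const.mul contDiff_id).mul (by simpa using hχ.iterate_deriv 1))
  have hη₁ (y : ℝ) (hy : 2 < y) : η y = 1 := by
    have hχy : χ =ᶠ[𝓝 y] fun _ => 1 :=
      eventuallyEq_of_mem (Ioi_mem_nhds hy) fun w hw => hχ₁ w (le_of_lt hw)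
    simp [η, hχ₁ y hy.le, hχy.deriv_eq]
  have hψ : ∀ z ∈ Ioi (0 : ℝ), deriv (fun s => F s z) t = η (t ^ (-c) * z) * Q z := by
    intro z hz
    have hev : (fun s => F s z) =ᶠ[𝓝 t] fun s => P z + s * χ (s ^ (-c) * z) * Q z :=
      eventuallyEq_of_mem (Ioi_mem_nhds ht) fun s hs => hF s hs z hz
    rw [hev.deriv_eq]
    exact (((hasDerivAt_mul_comp_rpow_neg_mul (hχ.differentiable (by simp)) ht c z).mul_const
      (Q z)).const_add (P z)).deriv
  have hψsmooth : ContDiffOn ℝ ∞ (fun z => deriv (fun s => F s z) t) (Ioi 0) :=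
    ((hη.comp (contDiff_const.mul contDiff_id)).contDiffOn.mul hQ).congr hψ
  exact iteratedDeriv_eqOn_Ici_of_eqOn_Ioi isOpen_Ioi hU (hψsmooth.of_le hn) (hQ.of_le hn)
    (fun z hz => by
      dsimp only
      rw [hψ z (hU (Ioi_subset_Ici_self hz)), hη₁ _ (two_lt_rpow_neg_mul ht hz), one_mul]) hx

end ApproximateSolution

theorem stmt_9_general (α β δ m₀ : ℝ) (hα : 1 < α) (hβ : β = 1 / (4 * α + 3))
    (hδ : δ ∈ Ioc (0:ℝ) 1)
    (χR : ℝ → ℝ) (hχR : ContDiff ℝ (⊤ : ℕ∞) χR)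
    (χ : ℝ → ℝ) (hχ : ContDiff ℝ (⊤ : ℕ∞) χ)
    (hχhigh : ∀ x : ℝ, 2 ≤ x → χ x = 1)
    (Θ₀ Θ₁ : ℝ → ℝ) (Θs : ℝ → ℝ → ℝ)
    (hΘ₀ : Θ₀ = fun x : ℝ => if 0 < x then x ^ (α - 1/2) * χR (x / δ) else 0)
    (hΘ₁ : ∀ x : ℝ, 0 < x →
      Θ₁ x = -(iteratedDeriv 3 Θ₀ x) - m₀ ^ 4 * deriv (fun z : ℝ => Θ₀ z ^ 5) x)
    (hΘs : ∀ t : ℝ, 0 < t → ∀ x : ℝ, 0 < x →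
      Θs t x = Θ₀ x + t * χ (t ^ (-(7 * β / 6)) * x) * Θ₁ x) :
    ∀ j : ℕ, j ≤ 6 → ∃ C > (0:ℝ),
      (∀ x ∈ Ioc (0:ℝ) δ, |iteratedDeriv j Θ₁ x| ≤ C * x ^ (α - 7/2 - (j : ℝ))) ∧
      (∀ t ∈ Ioc (0:ℝ) 1, ∀ x ∈ Ioc (0:ℝ) δ, 2 * t ^ (7 * β / 6) ≤ x →
        |iteratedDeriv j (Θs t) x| ≤ C * x ^ (α - 1/2 - (j : ℝ)) ∧
        |iteratedDeriv j (fun z : ℝ => deriv (fun s : ℝ => Θs s z) t) x|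
          ≤ C * x ^ (α - 7/2 - (j : ℝ))) := by
  intro j _
  have hΘ₀poly : IsCutoffPoly χR δ (α - 1/2) Θ₀ :=
    (((IsCutoffPoly.rpow _).mul (IsCutoffPoly.cutoff 0)).mono (add_zero _).ge).congr
      fun x hx => by simp [hΘ₀, mem_Ioi.1 hx]
  have hΘ₁poly : IsCutoffPoly χR δ (α - 7/2) Θ₁ :=
    ((hΘ₀poly.neg_iteratedDeriv_three_sub_mul_deriv_pow_five hχR (by linarith) (m₀ ^ 4)).mono
      (by linarith)).congr fun x hx => (hΘ₁ x hx).symm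
  obtain ⟨C₀, hC₀, hΘ₀bound⟩ := (hΘ₀poly.iteratedDeriv hχR j).exists_abs_le hχR hδ.1
  obtain ⟨C₁, hC₁, hΘ₁bound⟩ := (hΘ₁poly.iteratedDeriv hχR j).exists_abs_le hχR hδ.1
  have hΘ₁bound' (x : ℝ) (hx : x ∈ Ioc 0 δ) :
      |iteratedDeriv j Θ₁ x| ≤ (C₀ + C₁) * x ^ (α - 7/2 - (j : ℝ)) :=
    (hΘ₁bound x hx).trans (by have := hx.1; gcongr; linarith)
  have hβ' : β ≤ 2 / 7 := by rw [hβ, div_le_iff₀ (by linarith)]; linarith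
  refine ⟨C₀ + C₁, by positivity, hΘ₁bound', fun t ht x hx hxt => ⟨?_, ?_⟩⟩
  · have htx : t ≤ x ^ 3 :=
      le_pow_three_of_rpow_le (e := 7 * β / 6) ht (by linarith)
        (by linarith [Real.rpow_nonneg ht.1.le (7 * β / 6)])
    rw [iteratedDeriv_eq_of_two_mul_rpow_le hχ hχhigh (hΘ₀poly.contDiffOn hχR)
      (hΘ₁poly.contDiffOn hχR) hΘs j ht.1 hxt]
    exact abs_add_mul_le_of_le_pow_three hx.1 ht.1 htx (by ring) (hΘ₀bound x hx) (hΘ₁bound x hx)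
  · rw [iteratedDeriv_deriv_eq_of_two_mul_rpow_le hχ hχhigh (hΘ₁poly.contDiffOn hχR) hΘs j ht.1
      hxt]
    exact hΘ₁bound' x hx

/-- Bounds on `Θ₁ = −Θ₀''' − m₀⁴(Θ₀⁵)'` and on the approximate solution
`Θ_♯(t,x) = Θ₀(x) + t χ(t^{−7β/6}x) Θ₁(x)` and its time derivative. -/
theorem stmt_9 (α β δ m₀ : ℝ) (hα : 1 < α) (hβ : β = 1 / (4 * α + 3))
    (hδ : δ ∈ Ioc (0:ℝ) 1) (hm₀ : 0 < m₀)
    (χR : ℝ → ℝ) (hχR : ContDiff ℝ (⊤ : ℕ∞) χR)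
    (hχR01 : ∀ x : ℝ, χR x ∈ Icc (0:ℝ) 1)
    (hχR1 : ∀ x : ℝ, x ≤ 1/2 → χR x = 1)
    (hχR0 : ∀ x : ℝ, 1 ≤ x → χR x = 0)
    (χ : ℝ → ℝ) (hχ : ContDiff ℝ (⊤ : ℕ∞) χ)
    (hχ01 : ∀ x : ℝ, χ x ∈ Icc (0:ℝ) 1)
    (hχlow : ∀ x : ℝ, x ≤ 1 → χ x = 0)
    (hχhigh : ∀ x : ℝ, 2 ≤ x → χ x = 1)
    (Θ₀ Θ₁ : ℝ → ℝ) (Θs : ℝ → ℝ → ℝ)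
    (hΘ₀ : Θ₀ = fun x : ℝ => if 0 < x then x ^ (α - 1/2) * χR (x / δ) else 0)
    (hΘ₁ : ∀ x : ℝ, 0 < x →
      Θ₁ x = -(iteratedDeriv 3 Θ₀ x) - m₀ ^ 4 * deriv (fun z : ℝ => Θ₀ z ^ 5) x)
    (hΘs : ∀ t : ℝ, 0 < t → ∀ x : ℝ, 0 < x →
      Θs t x = Θ₀ x + t * χ (t ^ (-(7 * β / 6)) * x) * Θ₁ x) :
    ∀ j : ℕ, j ≤ 6 → ∃ C > (0:ℝ),
      (∀ x ∈ Ioc (0:ℝ) δ, |iteratedDeriv j Θ₁ x| ≤ C * x ^ (α - 7/2 - (j : ℝ))) ∧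
      (∀ t ∈ Ioc (0:ℝ) 1, ∀ x ∈ Ioc (0:ℝ) δ, 2 * t ^ (7 * β / 6) ≤ x →
        |iteratedDeriv j (Θs t) x| ≤ C * x ^ (α - 1/2 - (j : ℝ)) ∧
        |iteratedDeriv j (fun z : ℝ => deriv (fun s : ℝ => Θs s z) t) x|
          ≤ C * x ^ (α - 7/2 - (j : ℝ))) :=
  stmt_9_general α β δ m₀ hα hβ hδ χR hχR χ hχ hχhigh Θ₀ Θ₁ Θs hΘ₀ hΘ₁ hΘs
end
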